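/- arXiv:1806.11367 — 2 statements merged into one kernel-verified Lean document; each statement's English description precedes it below -/
import Mathlib

section
/- Let u₀, u₁, u₂ be continuous weight functions on (0,∞) and let v₁, v₂ be weights on ℝⁿ. Define U₁(r) = sup_{r<t<∞} u₀(t) · (sup_{0<s<t} u₁(s)) and U₂(r) = sup_{0<t<r} u₂(t) for r > 0. Then the inequality sup_{r>0} u₂(r) ∫_{ℝⁿ∖B(0,r)} g(y) v₂(y) dy ≤ C · sup_{r>0} u₁(r) ( sup_{t>r} u₀(t) ∫_{B(0,t)} g(y) v₁(y) dy ) holds with some finite constant C for all nonnegative measurable g on ℝⁿ if and only if I := sup_{r>0} U₂(r) ( U₁(r)^{−1} · ess sup_{y ∈ ℝⁿ∖B(0,r)} v₁(y)^{−1} v₂(y) + ∫_r^∞ ess sup_{y ∈ ℝⁿ∖B(0,t)} ( v₁(y)^{−1} v₂(y) ) d( U₁(t)^{−1} ) ) < ∞, where the integral is a Lebesgue–Stieltjes integral with respect to the nondecreasing function t ↦ U₁(t)^{−1}. Moreover, the best (smallest) constant C in the inequality is equivalent to I, i.e. there exist absolute constants making C ≈ I. -/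
/-!
Write `G = 1 / U₁` (nondecreasing and right-continuous) and `W(t)` for the essential supremum of
`v₂ / v₁` outside `B(0,t)`.

Upper bound: for a fixed `g`, let `ν = g v₁ dy` and `μ = g v₂ dy`. The right-hand side `A` of the
inequality gives `ν(B(0,t)) ≤ A G(t)`, and `μ ≤ W(a) ν` outside `B(0,a)`. Cutting the complement
of `B(0,ρ)` into shells at the radii where `G` doubles gives
`μ(ℝⁿ \ B(0,ρ)) ≤ 4 A (G(ρ) W(ρ) + ∫_ρ^∞ W dG)`, hence `lhs ≤ 4 A I`.

Lower bound: test with `g = ∑ bᵢ 1_{Eᵢ} / v₁(Eᵢ)`, where `Eᵢ` lies outside `B(0,tᵢ)` and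
`v₂ / v₁` nearly reaches `W(tᵢ)` on it. With `bᵢ = G(tᵢ) - G(tᵢ₋₁)` this gives
`U₂(r) ∑ W(tᵢ) (G(tᵢ) - G(tᵢ₋₁)) ≤ C`, and a single set with mass `G(r)` gives
`U₂(r) G(r) W(r) ≤ C`. So `I ≤ 2 C`.
-/

open MeasureTheory ENNReal Set Metric

noncomputable section

abbrev Rn (n : ℕ) : Type := EuclideanSpace ℝ (Fin n)

/-- `v(E) = ∫_E v`. -/
def wMeasure {n : ℕ} (v : Rn n → ℝ) (E : Set (Rn n)) : ℝ≥0∞ :=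
  ∫⁻ x in E, ENNReal.ofReal (v x)

/-- `‖f‖_{L_p(Ω,v)}` for an `ℝ≥0∞`-valued `f`. -/
def wLp {n : ℕ} (p : ℝ) (v : Rn n → ℝ) (Ω : Set (Rn n)) (f : Rn n → ℝ≥0∞) : ℝ≥0∞ :=
  (∫⁻ x in Ω, f x ^ p * ENNReal.ofReal (v x)) ^ (1 / p)

/-- fractional maximal function `M_α f`. -/
def frMax {n : ℕ} (α : ℝ) (f : Rn n → ℝ) (x : Rn n) : ℝ≥0∞ :=
  ⨆ (r : ℝ) (_ : 0 < r),
    volume (ball x r) ^ (α / (n : ℝ) - 1) * ∫⁻ y in ball x r, ENNReal.ofReal (f y)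

/-- Riesz potential `I_α f`. -/
def riesz {n : ℕ} (α : ℝ) (f : Rn n → ℝ) (x : Rn n) : ℝ≥0∞ :=
  ∫⁻ y, ENNReal.ofReal (f y) * ENNReal.ofReal (dist x y) ^ (α - (n : ℝ))

/-- the (closed) cube centered at `x₀` with side length `2r`. -/
def cube {n : ℕ} (x₀ : Rn n) (r : ℝ) : Set (Rn n) := {y | ∀ i, |y i - x₀ i| ≤ r}

/-- a weight: locally integrable, positive a.e. -/
def IsWeight {n : ℕ} (v : Rn n → ℝ) : Prop :=
  LocallyIntegrable v volume ∧ ∀ᵐ x : Rn n ∂volume, 0 < v x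

/-- Muckenhoupt `A_∞`. -/
def IsAinfty {n : ℕ} (v : Rn n → ℝ) : Prop :=
  ∃ C : ℝ, 0 < C ∧ ∃ δ : ℝ, 0 < δ ∧ δ ≤ 1 ∧
    ∀ (x₀ : Rn n) (r : ℝ), 0 < r → ∀ E : Set (Rn n), MeasurableSet E → E ⊆ cube x₀ r →
      wMeasure v E ≤
        ENNReal.ofReal C * (volume E / volume (cube x₀ r)) ^ δ * wMeasure v (cube x₀ r)

/-- reverse doubling of order `β`. -/
def IsRD {n : ℕ} (v : Rn n → ℝ) (β : ℝ) : Prop :=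
  ∃ c : ℝ, 0 < c ∧ ∀ (x' x : Rn n) (r' r : ℝ), 0 < r' → 0 < r →
    ball x' r' ⊆ ball x r →
      wMeasure v (ball x' r') ≤
        ENNReal.ofReal c * (volume (ball x' r') / volume (ball x r)) ^ β *
          wMeasure v (ball x r)

/-- The Lebesgue–Stieltjes integral `∫_{(r,∞)} W dG` of a nonincreasing `W : ℝ → ℝ≥0∞`
with respect to a nondecreasing right-continuous `G : ℝ → ℝ≥0∞`, realized as the
supremum of lower Riemann–Stieltjes sums (with `W` evaluated at right endpoints). -/
def stieltjesIntegralFrom (W G : ℝ → ℝ≥0∞) (r : ℝ) : ℝ≥0∞ :=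
  ⨆ (k : ℕ) (t : Fin (k + 1) → ℝ) (_ : StrictMono t) (_ : r ≤ t 0),
    ∑ i : Fin k, W (t i.succ) * (G (t i.succ) - G (t i.castSucc))

/-- `U₁(r) = sup_{r<t<∞} u₀(t) · sup_{0<s<t} u₁(s)`. -/
def U1fun (u₀ u₁ : ℝ → ℝ) (r : ℝ) : ℝ≥0∞ :=
  ⨆ (t : ℝ) (_ : r < t),
    ENNReal.ofReal (u₀ t) * ⨆ (s : ℝ) (_ : 0 < s) (_ : s < t), ENNReal.ofReal (u₁ s)

/-- `U₂(r) = sup_{0<t<r} u₂(t)`. -/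
def U2fun (u₂ : ℝ → ℝ) (r : ℝ) : ℝ≥0∞ :=
  ⨆ (t : ℝ) (_ : 0 < t) (_ : t < r), ENNReal.ofReal (u₂ t)

/-- `W(t) = ess sup_{y ∈ ℝⁿ∖B(0,t)} v₁(y)⁻¹ v₂(y)`. -/
def Wfun {n : ℕ} (v₁ v₂ : Rn n → ℝ) (t : ℝ) : ℝ≥0∞ :=
  essSup (fun y => (ENNReal.ofReal (v₁ y))⁻¹ * ENNReal.ofReal (v₂ y))
    (volume.restrict ((ball (0 : Rn n) t)ᶜ))

/-- left-hand side of the two-operator inequality. -/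
def lhs8 {n : ℕ} (u₂ : ℝ → ℝ) (v₂ : Rn n → ℝ) (g : Rn n → ℝ≥0∞) : ℝ≥0∞ :=
  ⨆ (r : ℝ) (_ : 0 < r),
    ENNReal.ofReal (u₂ r) * ∫⁻ y in (ball (0 : Rn n) r)ᶜ, g y * ENNReal.ofReal (v₂ y)

/-- right-hand side of the two-operator inequality. -/
def rhs8 {n : ℕ} (u₀ u₁ : ℝ → ℝ) (v₁ : Rn n → ℝ) (g : Rn n → ℝ≥0∞) : ℝ≥0∞ :=
  ⨆ (r : ℝ) (_ : 0 < r),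
    ENNReal.ofReal (u₁ r) *
      ⨆ (t : ℝ) (_ : r < t),
        ENNReal.ofReal (u₀ t) * ∫⁻ y in ball (0 : Rn n) t, g y * ENNReal.ofReal (v₁ y)

/-- the constant `I`. -/
def Iconst8 {n : ℕ} (u₀ u₁ u₂ : ℝ → ℝ) (v₁ v₂ : Rn n → ℝ) : ℝ≥0∞ :=
  ⨆ (r : ℝ) (_ : 0 < r),
    U2fun u₂ r *
      ((U1fun u₀ u₁ r)⁻¹ * Wfun v₁ v₂ r +
        stieltjesIntegralFrom (Wfun v₁ v₂) (fun t => (U1fun u₀ u₁ t)⁻¹) r)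

theorem ENNReal.sum_iSup_eq_iSup_pi {ι : Type*} [Fintype ι] {κ : ι → Type*}
    [∀ i, Nonempty (κ i)] (f : ∀ i, κ i → ℝ≥0∞) :
    ∑ i, ⨆ j, f i j = ⨆ j : (∀ i, κ i), ∑ i, f i (j i) := by
  classical
  rw [← ENNReal.finsetSum_iSup fun j j' => ⟨fun i => if f i (j i) ≤ f i (j' i) then j' i else j i,
    fun i => by dsimp only; split_ifs with h <;> simp_all [le_of_not_ge]⟩]
  exact Finset.sum_congr rfl fun i _ => ((Function.surjective_eval i).iSup_comp (f i)).symm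

theorem ENNReal.le_two_mul_tsub {a b : ℝ≥0∞} (hb : b ≠ ⊤) (h : 2 * b ≤ a) :
    a ≤ 2 * (a - b) := by
  have hba : b ≤ a - b := ENNReal.le_sub_of_add_le_left hb (by rwa [← two_mul])
  calc a = a - b + b := (tsub_add_cancel_of_le ((le_mul_of_one_le_left' one_le_two).trans h)).symm
    _ ≤ a - b + (a - b) := by gcongr
    _ = 2 * (a - b) := (two_mul _).symm

section Partition

variable {W G : ℝ → ℝ≥0∞} {k : ℕ}

def partitionSum (W G : ℝ → ℝ≥0∞) {k : ℕ} (t : Fin (k + 1) → ℝ) : ℝ≥0∞ :=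
  ∑ i : Fin k, W (t i.succ) * (G (t i.succ) - G (t i.castSucc))

theorem partitionSum_le_stieltjesIntegralFrom {t : Fin (k + 1) → ℝ} (ht : StrictMono t) {r : ℝ}
    (hr : r ≤ t 0) : partitionSum W G t ≤ stieltjesIntegralFrom W G r :=
  le_iSup₂_of_le k t (le_iSup₂_of_le ht hr le_rfl)

theorem partitionSum_cons (b : ℝ) (t : Fin (k + 1) → ℝ) :
    partitionSum W G (Fin.cons b t : Fin (k + 2) → ℝ) =
      W (t 0) * (G (t 0) - G b) + partitionSum W G t := by
  simp [partitionSum, Fin.sum_univ_succ]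

theorem mul_tsub_add_partitionSum_le_stieltjesIntegralFrom {t : Fin (k + 1) → ℝ}
    (ht : StrictMono t) {r : ℝ} (hr : r ≤ t 0) :
    W (t 0) * (G (t 0) - G r) + partitionSum W G t ≤ stieltjesIntegralFrom W G r := by
  rcases hr.eq_or_lt with rfl | hr
  · simpa using partitionSum_le_stieltjesIntegralFrom ht le_rfl
  · rw [← partitionSum_cons]
    exact partitionSum_le_stieltjesIntegralFrom
      (Fin.strictMono_cons.2 ⟨fun j => hr.trans_le (ht.monotone (Fin.zero_le j)), ht⟩) le_rfl

/-- The bound by `G` at the last point is only there to carry the induction. -/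
theorem sum_ite_tsub_le_iSup (hGm : Monotone G) (c : ℝ) :
    ∀ {k : ℕ} {t : Fin (k + 1) → ℝ}, Monotone t →
      ∑ i : Fin k, (if t i.succ < c then G (t i.succ) - G (t i.castSucc) else 0) ≤
        min (G (t (Fin.last k))) (⨆ x < c, G x) := by
  intro k
  induction k with
  | zero => intro t _; simp
  | succ k ih =>
    intro t ht
    rw [Fin.sum_univ_castSucc]
    have h := ih (t := t ∘ Fin.castSucc) (ht.comp Fin.strictMono_castSucc.monotone)
    simp only [Function.comp_apply, Fin.succ_castSucc, Fin.succ_last] at h ⊢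
    have hlast : G (t (Fin.last k).castSucc) ≤ G (t (Fin.last (k + 1))) :=
      hGm (ht (Fin.le_last _))
    split_ifs with hc
    · set a := G (t (Fin.last k).castSucc)
      have hsum := add_le_add (h.trans (min_le_left _ _)) (le_refl (G (t (Fin.last (k + 1))) - a))
      rw [add_tsub_cancel_of_le hlast] at hsum
      exact le_min hsum (hsum.trans (le_iSup₂ (f := fun x _ => G x) _ hc))
    · rw [add_zero]
      exact h.trans (min_le_min hlast le_rfl)

theorem exists_doubling_point (hGm : Monotone G) (hG : ∀ s, ⨅ t > s, G t = G s) {b T : ℝ}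
    (hbT : b < T) (hb0 : G b ≠ 0) (hbtop : G b ≠ ⊤) :
    ∃ s, b < s ∧ s ≤ T ∧ (∀ t < s, G t ≤ 2 * G b) ∧ (s < T → 2 * G b ≤ G s) := by
  set S := {t | t ≤ T ∧ G t ≤ 2 * G b}
  have hbdd : BddAbove S := ⟨T, fun t ht => ht.1⟩
  have hlt : G b < 2 * G b := by
    rw [two_mul]; exact ENNReal.lt_add_right hbtop hb0
  have hbS : b ∈ S := ⟨hbT.le, hlt.le⟩
  refine ⟨sSup S, ?_, csSup_le ⟨b, hbS⟩ fun t ht => ht.1, fun t ht => ?_, fun hsT => ?_⟩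
  · obtain ⟨t, hbt, ht⟩ : ∃ t > b, G t < 2 * G b := by
      simpa only [iInf_lt_iff, exists_prop] using (hG b).trans_lt hlt
    exact (lt_min hbt hbT).trans_le
      (le_csSup hbdd ⟨min_le_right _ _, (hGm (min_le_left _ _)).trans ht.le⟩)
  · obtain ⟨t', ht'S, htt'⟩ := (lt_csSup_iff hbdd ⟨b, hbS⟩).1 ht
    exact (hGm htt'.le).trans ht'S.2
  · rw [← hG (sSup S)]
    refine le_iInf₂ fun t ht => ?_
    by_contra! h
    exact (lt_min ht hsT).not_ge
      (le_csSup hbdd ⟨min_le_right _ _, (hGm (min_le_left _ _)).trans h.le⟩)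

end Partition

section Shells

variable {X : Type*} [PseudoMetricSpace X] [MeasurableSpace X]
  {μ ν : Measure X} {x₀ : X} {A : ℝ≥0∞} {W G : ℝ → ℝ≥0∞}

theorem measure_ball_le_iSup_ball (μ : Measure X) (x : X) (r : ℝ) :
    μ (ball x r) ≤ ⨆ ρ < r, μ (ball x ρ) := by
  have hU : ball x r = ⋃ m : ℕ, ball x (r - 1 / (m + 1)) := by
    ext y
    simp only [mem_ball, mem_iUnion]
    refine ⟨fun h => ?_, fun ⟨m, hm⟩ => by linarith [Nat.one_div_pos_of_nat (α := ℝ) (n := m)]⟩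
    obtain ⟨m, hm⟩ := exists_nat_one_div_lt (sub_pos.2 h)
    exact ⟨m, by linarith⟩
  rw [hU, Monotone.measure_iUnion fun m m' h => ball_subset_ball (by
    linarith [Nat.one_div_le_one_div (α := ℝ) h])]
  exact iSup_le fun m => le_iSup₂_of_le _ (by linarith [Nat.one_div_pos_of_nat (α := ℝ) (n := m)])
    le_rfl

theorem measure_compl_ball_le_iSup {r : ℝ} (h : μ (sphere x₀ r) = 0) :
    μ (ball x₀ r)ᶜ ≤ ⨆ ρ > r, μ (ball x₀ ρ)ᶜ := by
  have hsub : (ball x₀ r)ᶜ ⊆ sphere x₀ r ∪ ⋃ m : ℕ, (ball x₀ (r + 1 / (m + 1)))ᶜ := by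
    intro y hy
    simp only [mem_compl_iff, mem_ball, not_lt] at hy
    rcases hy.eq_or_lt with hy | hy
    · exact Or.inl hy.symm
    obtain ⟨m, hm⟩ := exists_nat_one_div_lt (sub_pos.2 hy)
    exact Or.inr (mem_iUnion.2 ⟨m, by simp only [mem_compl_iff, mem_ball, not_lt]; linarith⟩)
  calc μ (ball x₀ r)ᶜ ≤ μ (sphere x₀ r) + μ (⋃ m : ℕ, (ball x₀ (r + 1 / (m + 1)))ᶜ) :=
        (measure_mono hsub).trans (measure_union_le _ _)
    _ = ⨆ m : ℕ, μ (ball x₀ (r + 1 / (m + 1)))ᶜ := by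
        rw [h, zero_add, Monotone.measure_iUnion fun m m' h => compl_subset_compl.2
          (ball_subset_ball (by linarith [Nat.one_div_le_one_div (α := ℝ) h]))]
    _ ≤ ⨆ ρ > r, μ (ball x₀ ρ)ᶜ := iSup_le fun m => le_iSup₂_of_le _
        (by linarith [Nat.one_div_pos_of_nat (α := ℝ) (n := m)]) le_rfl

theorem measure_compl_le_iSup_ball_diff (μ : Measure X) (x : X) (s : Set X) :
    μ sᶜ ≤ ⨆ T : ℝ, μ (ball x T \ s) := by
  have hU : sᶜ = ⋃ m : ℕ, ball x m \ s := by
    rw [← iUnion_sdiff, iUnion_ball_nat, compl_eq_univ_sdiff]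
  rw [hU, Monotone.measure_iUnion fun m m' h => sdiff_subset_sdiff_left
    (ball_subset_ball (Nat.cast_le.2 h))]
  exact iSup_le fun m => le_iSup_of_le (m : ℝ) le_rfl

theorem measure_ball_eq_zero_of_forall_lt (hν : ∀ t, ν (ball x₀ t) ≤ A * G t) (hμν : μ ≪ ν)
    {τ : ℝ} (hG : ∀ t < τ, G t = 0) : μ (ball x₀ τ) = 0 := by
  refine hμν (le_antisymm ((measure_ball_le_iSup_ball ν x₀ τ).trans ?_) bot_le)
  exact iSup₂_le fun t ht => (hν t).trans_eq (by rw [hG t ht, mul_zero])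

variable [OpensMeasurableSpace X]

theorem measure_ball_diff_ball_le (hν : ∀ t, ν (ball x₀ t) ≤ A * G t)
    (hW : ∀ a s, MeasurableSet s → s ⊆ (ball x₀ a)ᶜ → μ s ≤ W a * ν s) {b s : ℝ} {c : ℝ≥0∞}
    (hc : ∀ t < s, G t ≤ c) :
    μ (ball x₀ s \ ball x₀ b) ≤ W b * (A * c) :=
  calc μ (ball x₀ s \ ball x₀ b)
      ≤ W b * ν (ball x₀ s \ ball x₀ b) :=
        hW b _ (measurableSet_ball.diff measurableSet_ball) fun _ hy => hy.2
    _ ≤ W b * (A * c) := by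
        gcongr
        refine (measure_mono sdiff_subset).trans ((measure_ball_le_iSup_ball ν x₀ s).trans ?_)
        exact iSup₂_le fun t ht => (hν t).trans (by gcongr; exact hc t ht)

/-- Stop at the first radius `s` where `G` has doubled: the shell `B(s) \ B(b)` costs
`2 A W(b) G(b)`, and because `G s ≤ 2 (G s - G b)` the cost `2 A W(s) G(s)` of the next shell
is covered by the new Stieltjes term `4 A W(s) (G s - G b)`. -/
theorem exists_partition_measure_ball_diff_ball_le (hGm : Monotone G) (hGtop : ∀ t, G t ≠ ⊤)
    (hG : ∀ s, ⨅ t > s, G t = G s) (hν : ∀ t, ν (ball x₀ t) ≤ A * G t)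
    (hW : ∀ a s, MeasurableSet s → s ⊆ (ball x₀ a)ᶜ → μ s ≤ W a * ν s) (T : ℝ) (N : ℕ) :
    ∀ b, G b ≠ 0 → G T < 2 ^ N * G b → ∃ k, ∃ t : Fin (k + 1) → ℝ, StrictMono t ∧ t 0 = b ∧
      μ (ball x₀ T \ ball x₀ b) ≤ 2 * A * (W b * G b) + 4 * A * partitionSum W G t := by
  have trivial_partition : ∀ b, μ (ball x₀ T \ ball x₀ b) ≤ 2 * A * (W b * G b) →
      ∃ k, ∃ t : Fin (k + 1) → ℝ, StrictMono t ∧ t 0 = b ∧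
        μ (ball x₀ T \ ball x₀ b) ≤ 2 * A * (W b * G b) + 4 * A * partitionSum W G t :=
    fun b h => ⟨0, fun _ => b, Subsingleton.strictMono (α := Fin 1) _, rfl,
      by simpa [partitionSum] using h⟩
  have empty_shell : ∀ b, T ≤ b → μ (ball x₀ T \ ball x₀ b) ≤ 2 * A * (W b * G b) := fun b h => by
    rw [sdiff_eq_empty.2 (ball_subset_ball h), measure_empty]; exact zero_le
  induction N with
  | zero =>
    intro b _ hT
    exact trivial_partition b (empty_shell b (hGm.reflect_lt (by simpa using hT)).le)
  | succ N ih =>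
    intro b hb hT
    rcases le_or_gt T b with hTb | hbT
    · exact trivial_partition b (empty_shell b hTb)
    obtain ⟨s, hbs, hsT, hbelow, hjump⟩ := exists_doubling_point hGm hG hbT hb (hGtop b)
    have hfirst : μ (ball x₀ s \ ball x₀ b) ≤ 2 * A * (W b * G b) :=
      (measure_ball_diff_ball_le hν hW hbelow).trans_eq (by ring)
    rcases hsT.lt_or_eq with hsT | rfl
    swap
    · exact trivial_partition b hfirst
    have hdouble := hjump hsT
    obtain ⟨k, t, ht, ht0, hμ⟩ := ih s ((pos_iff_ne_zero.2 hb).trans_le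
      (le_mul_of_one_le_left' one_le_two |>.trans hdouble)).ne' (hT.trans_le (by
        calc 2 ^ (N + 1) * G b = 2 ^ N * (2 * G b) := by ring
          _ ≤ 2 ^ N * G s := by gcongr))
    refine ⟨k + 1, Fin.cons b t, Fin.strictMono_cons.2
      ⟨fun j => (ht0 ▸ hbs : b < t 0).trans_le (ht.monotone (Fin.zero_le j)), ht⟩, rfl, ?_⟩
    calc μ (ball x₀ T \ ball x₀ b)
        ≤ μ (ball x₀ T \ ball x₀ s) + μ (ball x₀ s \ ball x₀ b) :=
          (measure_mono (sdiff_triangle _ _ _)).trans (measure_union_le _ _)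
      _ ≤ 2 * A * (W s * G s) + 4 * A * partitionSum W G t + 2 * A * (W b * G b) :=
          add_le_add hμ hfirst
      _ ≤ 2 * A * (W s * (2 * (G s - G b))) + 4 * A * partitionSum W G t +
            2 * A * (W b * G b) := by
          gcongr; exact ENNReal.le_two_mul_tsub (hGtop b) hdouble
      _ = 2 * A * (W b * G b) + 4 * A * partitionSum W G (Fin.cons b t : Fin (k + 2) → ℝ) := by
          rw [partitionSum_cons, ht0]; ring

theorem measure_compl_ball_le_of_ne_zero (hGm : Monotone G) (hGtop : ∀ t, G t ≠ ⊤)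
    (hG : ∀ s, ⨅ t > s, G t = G s) (hWa : Antitone W) (hν : ∀ t, ν (ball x₀ t) ≤ A * G t)
    (hW : ∀ a s, MeasurableSet s → s ⊆ (ball x₀ a)ᶜ → μ s ≤ W a * ν s) {ρ b : ℝ} (hρb : ρ ≤ b)
    (hb : G b ≠ 0) :
    μ (ball x₀ b)ᶜ ≤ 4 * A * (G ρ * W ρ + stieltjesIntegralFrom W G ρ) := by
  refine (measure_compl_le_iSup_ball_diff μ x₀ _).trans (iSup_le fun T => ?_)
  obtain ⟨N, hN⟩ : ∃ N : ℕ, G T < 2 ^ N * G b := by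
    obtain ⟨N, hN⟩ := ENNReal.exists_nat_gt (ENNReal.div_lt_top (hGtop T) hb).ne
    refine ⟨N, (ENNReal.div_lt_iff (Or.inl hb) (Or.inl (hGtop b))).1 (hN.trans_le ?_)⟩
    exact_mod_cast Nat.lt_two_pow_self.le
  obtain ⟨k, t, ht, rfl, hμ⟩ :=
    exists_partition_measure_ball_diff_ball_le hGm hGtop hG hν hW T N _ hb hN
  have hWG : W (t 0) * G (t 0) ≤ G ρ * W ρ + W (t 0) * (G (t 0) - G ρ) :=
    calc W (t 0) * G (t 0) ≤ W (t 0) * (G ρ + (G (t 0) - G ρ)) := by gcongr; exact le_add_tsub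
      _ = W (t 0) * G ρ + W (t 0) * (G (t 0) - G ρ) := mul_add _ _ _
      _ ≤ G ρ * W ρ + W (t 0) * (G (t 0) - G ρ) := by rw [mul_comm]; gcongr; exact hWa hρb
  calc μ (ball x₀ T \ ball x₀ (t 0))
      ≤ 2 * A * (W (t 0) * G (t 0)) + 4 * A * partitionSum W G t := hμ
    _ ≤ 4 * A * (W (t 0) * G (t 0) + partitionSum W G t) := by
        rw [mul_add]; gcongr; norm_num
    _ ≤ 4 * A * (G ρ * W ρ + (W (t 0) * (G (t 0) - G ρ) + partitionSum W G t)) := by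
        rw [← add_assoc]; gcongr
    _ ≤ 4 * A * (G ρ * W ρ + stieltjesIntegralFrom W G ρ) := by
        gcongr; exact mul_tsub_add_partitionSum_le_stieltjesIntegralFrom ht hρb

theorem measure_compl_ball_le (hGm : Monotone G) (hGtop : ∀ t, G t ≠ ⊤)
    (hG : ∀ s, ⨅ t > s, G t = G s) (hWa : Antitone W) (hν : ∀ t, ν (ball x₀ t) ≤ A * G t)
    (hW : ∀ a s, MeasurableSet s → s ⊆ (ball x₀ a)ᶜ → μ s ≤ W a * ν s) (hμν : μ ≪ ν)
    (hsphere : ∀ r, μ (sphere x₀ r) = 0) (ρ : ℝ) :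
    μ (ball x₀ ρ)ᶜ ≤ 4 * A * (G ρ * W ρ + stieltjesIntegralFrom W G ρ) := by
  rcases ne_or_eq (G ρ) 0 with hρ | hρ
  · exact measure_compl_ball_le_of_ne_zero hGm hGtop hG hWa hν hW le_rfl hρ
  -- `G` vanishes below `sSup {G = 0}`, so `μ` has no mass there, and `G > 0` beyond it.
  set Z := {t | G t = 0}
  by_cases hZ : BddAbove Z
  · have hρτ : ρ ≤ sSup Z := le_csSup hZ hρ
    have hball : μ (ball x₀ (sSup Z)) = 0 := measure_ball_eq_zero_of_forall_lt hν hμν fun t ht => by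
      obtain ⟨z, hz, htz⟩ := (lt_csSup_iff hZ ⟨ρ, hρ⟩).1 ht
      exact le_antisymm ((hGm htz.le).trans hz.le) zero_le
    calc μ (ball x₀ ρ)ᶜ ≤ μ (ball x₀ (sSup Z)) + μ (ball x₀ (sSup Z))ᶜ :=
          (measure_mono (subset_univ _)).trans
            (by rw [← union_compl_self (ball x₀ (sSup Z))]; exact measure_union_le _ _)
      _ ≤ ⨆ b > sSup Z, μ (ball x₀ b)ᶜ := by
          rw [hball, zero_add]; exact measure_compl_ball_le_iSup (hsphere _)
      _ ≤ _ := iSup₂_le fun b hb => measure_compl_ball_le_of_ne_zero hGm hGtop hG hWa hν hW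
          (hρτ.trans hb.le) fun h => (le_csSup hZ h).not_gt hb
  · have hball : ∀ T, μ (ball x₀ T) = 0 := fun T => measure_ball_eq_zero_of_forall_lt hν hμν
      fun t _ => by
        obtain ⟨z, hz, htz⟩ := not_bddAbove_iff.1 hZ t
        exact le_antisymm ((hGm htz.le).trans hz.le) zero_le
    refine (measure_compl_le_iSup_ball_diff μ x₀ _).trans (iSup_le fun T => ?_)
    exact (measure_mono_null sdiff_subset (hball T)).le.trans zero_le

end Shells

section Weights

variable {n : ℕ} {u₀ u₁ u₂ : ℝ → ℝ} {v₁ v₂ : Rn n → ℝ}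

theorem ofReal_mul_ofReal_le_U1fun {ρ t x : ℝ} (hρ : 0 < ρ) (hρt : ρ < t) (hxt : x < t) :
    ENNReal.ofReal (u₀ t) * ENNReal.ofReal (u₁ ρ) ≤ U1fun u₀ u₁ x :=
  le_iSup₂_of_le t hxt (mul_le_mul_right
    (le_iSup₂_of_le ρ hρ (le_iSup (fun _ : ρ < t => ENNReal.ofReal (u₁ ρ)) hρt)) _)

theorem ofReal_le_U2fun {r ρ : ℝ} (hr : 0 < r) (hρ : r < ρ) :
    ENNReal.ofReal (u₂ r) ≤ U2fun u₂ ρ :=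
  le_iSup₂_of_le r hr (le_iSup (fun _ : r < ρ => ENNReal.ofReal (u₂ r)) hρ)

theorem U1fun_antitone : Antitone (U1fun u₀ u₁) := fun _ _ hab =>
  iSup₂_le fun t ht => le_iSup₂_of_le t (hab.trans_lt ht) le_rfl

theorem U1fun_ne_zero (h₀p : ∀ t ∈ Ioi (0 : ℝ), 0 < u₀ t) (h₁p : ∀ t ∈ Ioi (0 : ℝ), 0 < u₁ t)
    (r : ℝ) : U1fun u₀ u₁ r ≠ 0 := by
  have ht : 0 < max r 0 + 1 := by positivity
  refine (ENNReal.mul_pos ?_ ?_).trans_le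
    (ofReal_mul_ofReal_le_U1fun (half_pos ht) (half_lt_self ht) (by linarith [le_max_left r 0]))
    |>.ne'
  · exact (ENNReal.ofReal_pos.2 (h₀p _ ht)).ne'
  · exact (ENNReal.ofReal_pos.2 (h₁p _ (half_pos ht))).ne'

theorem iInf_inv_U1fun (s : ℝ) : ⨅ t > s, (U1fun u₀ u₁ t)⁻¹ = (U1fun u₀ u₁ s)⁻¹ := by
  simp_rw [← ENNReal.inv_iSup]
  congr 1
  refine le_antisymm (iSup₂_le fun t ht => U1fun_antitone ht.le) (iSup₂_le fun t ht => ?_)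
  exact le_iSup₂_of_le ((s + t) / 2) (by linarith) (le_iSup₂_of_le t (by linarith) le_rfl)

theorem Wfun_antitone : Antitone (Wfun v₁ v₂) := fun _ _ hab =>
  essSup_mono_measure (Measure.absolutelyContinuous_of_le
    (Measure.restrict_mono (compl_subset_compl.2 (ball_subset_ball hab)) le_rfl))

theorem U1fun_mul_le_rhs8 (g : Rn n → ℝ≥0∞) (t : ℝ) :
    U1fun u₀ u₁ t * ∫⁻ y in ball 0 t, g y * ENNReal.ofReal (v₁ y) ≤ rhs8 u₀ u₁ v₁ g := by
  simp only [U1fun, ENNReal.iSup_mul, ENNReal.mul_iSup]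
  refine iSup₂_le fun t' ht' => iSup₂_le fun ρ hρ => iSup_le fun hρt' => ?_
  calc ENNReal.ofReal (u₀ t') * ENNReal.ofReal (u₁ ρ) *
        ∫⁻ y in ball 0 t, g y * ENNReal.ofReal (v₁ y)
      ≤ ENNReal.ofReal (u₁ ρ) *
          (ENNReal.ofReal (u₀ t') * ∫⁻ y in ball 0 t', g y * ENNReal.ofReal (v₁ y)) := by
        rw [mul_comm (ENNReal.ofReal (u₀ t')), mul_assoc]
        gcongr
    _ ≤ rhs8 u₀ u₁ v₁ g := by
        refine le_iSup₂_of_le ρ hρ (mul_le_mul_right ?_ _)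
        exact le_iSup₂ (f := fun t (_ : ρ < t) =>
          ENNReal.ofReal (u₀ t) * ∫⁻ y in ball 0 t, g y * ENNReal.ofReal (v₁ y)) t' hρt'

theorem rhs8_le_one {g : Rn n → ℝ≥0∞}
    (h : ∀ c, ∫⁻ y in ball 0 c, g y * ENNReal.ofReal (v₁ y) ≤ ⨆ x < c, (U1fun u₀ u₁ x)⁻¹) :
    rhs8 u₀ u₁ v₁ g ≤ 1 := by
  refine iSup₂_le fun ρ hρ => ?_
  simp only [ENNReal.mul_iSup]
  refine iSup₂_le fun t hρt => ?_
  calc ENNReal.ofReal (u₁ ρ) *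
        (ENNReal.ofReal (u₀ t) * ∫⁻ y in ball 0 t, g y * ENNReal.ofReal (v₁ y))
      ≤ ENNReal.ofReal (u₁ ρ) * (ENNReal.ofReal (u₀ t) * ⨆ x < t, (U1fun u₀ u₁ x)⁻¹) := by
        gcongr; exact h t
    _ = ⨆ x < t, ENNReal.ofReal (u₀ t) * ENNReal.ofReal (u₁ ρ) * (U1fun u₀ u₁ x)⁻¹ := by
        simp only [ENNReal.mul_iSup, mul_assoc, mul_left_comm (ENNReal.ofReal (u₁ ρ))]
    _ ≤ 1 := iSup₂_le fun x hx => (mul_le_mul_left (ofReal_mul_ofReal_le_U1fun hρ hρt hx) _).trans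
        (ENNReal.mul_inv_le_one _)

theorem IsWeight.aemeasurable_ofReal {v : Rn n → ℝ} (hv : IsWeight v) :
    AEMeasurable (fun y => ENNReal.ofReal (v y)) :=
  hv.1.aestronglyMeasurable.aemeasurable.ennreal_ofReal

theorem withDensity_compl_ball_le (hn : 1 ≤ n) (h₀p : ∀ t ∈ Ioi (0 : ℝ), 0 < u₀ t)
    (h₁p : ∀ t ∈ Ioi (0 : ℝ), 0 < u₁ t) (hv₁ : IsWeight v₁) (hv₂ : IsWeight v₂)
    {g : Rn n → ℝ≥0∞} (hg : Measurable g) (hA : rhs8 u₀ u₁ v₁ g ≠ ⊤) (ρ : ℝ) :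
    volume.withDensity (fun y => g y * ENNReal.ofReal (v₂ y)) (ball 0 ρ)ᶜ ≤
      4 * rhs8 u₀ u₁ v₁ g * ((U1fun u₀ u₁ ρ)⁻¹ * Wfun v₁ v₂ ρ +
        stieltjesIntegralFrom (Wfun v₁ v₂) (fun t => (U1fun u₀ u₁ t)⁻¹) ρ) := by
  have : Nonempty (Fin n) := ⟨⟨0, hn⟩⟩
  set w : Rn n → ℝ≥0∞ := fun y => (ENNReal.ofReal (v₁ y))⁻¹ * ENNReal.ofReal (v₂ y)
  set ν := volume.withDensity fun y => g y * ENNReal.ofReal (v₁ y)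
  have hμ : volume.withDensity (fun y => g y * ENNReal.ofReal (v₂ y)) = ν.withDensity w := by
    refine (withDensity_congr_ae ?_).trans (withDensity_mul₀ (hg.aemeasurable.mul
      hv₁.aemeasurable_ofReal) (hv₁.aemeasurable_ofReal.inv.mul hv₂.aemeasurable_ofReal))
    filter_upwards [hv₁.2] with y hy
    simp only [Pi.mul_apply, w, mul_assoc, ← mul_assoc (ENNReal.ofReal (v₁ y)),
      ENNReal.mul_inv_cancel (ENNReal.ofReal_pos.2 hy).ne' ENNReal.ofReal_ne_top, one_mul]
  have hν : ∀ t, ν (ball 0 t) ≤ rhs8 u₀ u₁ v₁ g * (U1fun u₀ u₁ t)⁻¹ := fun t => by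
    rw [withDensity_apply _ measurableSet_ball, ← div_eq_mul_inv,
      ENNReal.le_div_iff_mul_le (Or.inl (U1fun_ne_zero h₀p h₁p t)) (Or.inr hA), mul_comm]
    exact U1fun_mul_le_rhs8 g t
  have hW : ∀ a s, MeasurableSet s → s ⊆ (ball 0 a)ᶜ →
      ν.withDensity w s ≤ Wfun v₁ v₂ a * ν s := by
    intro a s hs hsa
    rw [withDensity_apply _ hs, ← setLIntegral_const]
    refine lintegral_mono_ae (ae_restrict_of_ae_restrict_of_subset hsa ?_)
    exact ((withDensity_absolutelyContinuous _ _).restrict _).ae_le (ENNReal.ae_le_essSup w)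
  rw [hμ]
  exact measure_compl_ball_le (fun _ _ h => ENNReal.inv_le_inv.2 (U1fun_antitone h))
    (fun t => ENNReal.inv_ne_top.2 (U1fun_ne_zero h₀p h₁p t)) iInf_inv_U1fun Wfun_antitone hν hW
    (withDensity_absolutelyContinuous _ _) (fun r => ((withDensity_absolutelyContinuous _ _).trans
      (withDensity_absolutelyContinuous _ _)) (Measure.addHaar_sphere volume 0 r)) ρ

theorem lhs8_le_mul_Iconst8 (hn : 1 ≤ n) (h₀p : ∀ t ∈ Ioi (0 : ℝ), 0 < u₀ t)
    (h₁p : ∀ t ∈ Ioi (0 : ℝ), 0 < u₁ t) (hv₁ : IsWeight v₁) (hv₂ : IsWeight v₂)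
    {g : Rn n → ℝ≥0∞} (hg : Measurable g) (hA : rhs8 u₀ u₁ v₁ g ≠ ⊤) :
    lhs8 u₂ v₂ g ≤ 4 * rhs8 u₀ u₁ v₁ g * Iconst8 u₀ u₁ u₂ v₁ v₂ := by
  have : Nonempty (Fin n) := ⟨⟨0, hn⟩⟩
  set μ := volume.withDensity fun y => g y * ENNReal.ofReal (v₂ y)
  refine iSup₂_le fun r hr => ?_
  rw [← withDensity_apply _ measurableSet_ball.compl]
  calc ENNReal.ofReal (u₂ r) * μ (ball 0 r)ᶜ
      ≤ ENNReal.ofReal (u₂ r) * ⨆ ρ > r, μ (ball 0 ρ)ᶜ := by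
        gcongr
        exact measure_compl_ball_le_iSup
          (withDensity_absolutelyContinuous _ _ (Measure.addHaar_sphere volume 0 r))
    _ = ⨆ ρ > r, ENNReal.ofReal (u₂ r) * μ (ball 0 ρ)ᶜ := by simp only [ENNReal.mul_iSup]
    _ ≤ 4 * rhs8 u₀ u₁ v₁ g * Iconst8 u₀ u₁ u₂ v₁ v₂ := iSup₂_le fun ρ hρ => by
        refine (mul_le_mul' (ofReal_le_U2fun hr hρ)
          (withDensity_compl_ball_le hn h₀p h₁p hv₁ hv₂ hg hA ρ)).trans ?_
        rw [mul_left_comm]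
        gcongr
        exact le_iSup₂ (f := fun r (_ : 0 < r) => U2fun u₂ r * _) ρ (hr.trans hρ)

theorem setLIntegral_sum_indicator_mul {v : Rn n → ℝ} (hv : IsWeight v) {ι : Type*} [Fintype ι]
    (c : ι → ℝ≥0∞) {E : ι → Set (Rn n)} (hE : ∀ i, MeasurableSet (E i)) (S : Set (Rn n)) :
    ∫⁻ y in S, (∑ i, c i * (E i).indicator 1 y) * ENNReal.ofReal (v y) =
      ∑ i, c i * wMeasure v (E i ∩ S) := by
  have hmeas : ∀ i, AEMeasurable (fun y => (E i).indicator 1 y * ENNReal.ofReal (v y))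
      (volume.restrict S) := fun i =>
    (aemeasurable_one.indicator (hE i)).mul hv.aemeasurable_ofReal.restrict
  simp only [Finset.sum_mul, mul_assoc]
  rw [lintegral_finsetSum' _ fun i _ => (hmeas i).const_mul _]
  refine Finset.sum_congr rfl fun i _ => ?_
  rw [lintegral_const_mul'' _ (hmeas i), wMeasure, ← Measure.restrict_restrict (hE i),
    ← lintegral_indicator (hE i)]
  congr 2 with y
  by_cases hy : y ∈ E i <;> simp [hy]

theorem exists_mul_wMeasure_le_wMeasure (hv₁ : IsWeight v₁) (hv₂ : IsWeight v₂) {a : ℝ}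
    {M : ℝ≥0∞} (hM : M < Wfun v₁ v₂ a) :
    ∃ E, MeasurableSet E ∧ E ⊆ (ball 0 a)ᶜ ∧ wMeasure v₁ E ≠ 0 ∧ wMeasure v₁ E ≠ ⊤ ∧
      M * wMeasure v₁ E ≤ wMeasure v₂ E := by
  have hw := hv₁.aemeasurable_ofReal.inv.mul hv₂.aemeasurable_ofReal
  set S := {y | M < hw.mk _ y} ∩ (ball (0 : Rn n) a)ᶜ
  have hSm : MeasurableSet S :=
    (measurableSet_lt measurable_const hw.measurable_mk).inter measurableSet_ball.compl
  have hS : volume S ≠ 0 := fun h0 => hM.not_ge <| essSup_le_of_ae_le M <| by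
    rw [Filter.EventuallyLE, ae_restrict_iff' measurableSet_ball.compl]
    filter_upwards [hw.ae_eq_mk, measure_eq_zero_iff_ae_notMem.1 h0] with y hy hyS hya
    exact hy.le.trans (not_lt.1 fun h => hyS ⟨h, hya⟩)
  obtain ⟨m, hm⟩ : ∃ m : ℕ, volume (S ∩ ball 0 m) ≠ 0 := by
    by_contra! h
    exact hS (measure_mono_null (by rw [← inter_iUnion, iUnion_ball_nat, inter_univ])
      (measure_iUnion_null h))
  have hEm : MeasurableSet (S ∩ ball 0 m) := hSm.inter measurableSet_ball
  refine ⟨S ∩ ball 0 m, hEm, fun y hy => hy.1.2, fun h0 => hm ?_, ?_, ?_⟩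
  · rw [wMeasure, lintegral_eq_zero_iff' hv₁.aemeasurable_ofReal.restrict] at h0
    rw [← Measure.restrict_eq_zero, ← ae_eq_bot, ← Filter.eventually_false_iff_eq_bot]
    filter_upwards [h0, ae_restrict_of_ae hv₁.2] with y h1 h2
    exact (ENNReal.ofReal_pos.2 h2).ne' h1
  · refine (lt_of_le_of_lt (lintegral_mono_set (inter_subset_right.trans ball_subset_closedBall))
      ?_).ne
    exact (hv₁.1.integrableOn_isCompact (isCompact_closedBall 0 m)).lintegral_lt_top
  · rw [wMeasure, wMeasure, ← lintegral_const_mul' _ _ (hM.trans_le le_top).ne]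
    refine lintegral_mono_ae ?_
    filter_upwards [ae_restrict_mem hEm, ae_restrict_of_ae hw.ae_eq_mk, ae_restrict_of_ae hv₁.2]
      with y hyE hy hpos
    have h0 : ENNReal.ofReal (v₁ y) ≠ 0 := (ENNReal.ofReal_pos.2 hpos).ne'
    calc M * ENNReal.ofReal (v₁ y)
        ≤ (ENNReal.ofReal (v₁ y))⁻¹ * ENNReal.ofReal (v₂ y) * ENNReal.ofReal (v₁ y) := by
          gcongr; exact (hyE.1.1.trans_eq hy.symm).le
      _ = ENNReal.ofReal (v₂ y) := by
          rw [mul_comm, ← mul_assoc, ENNReal.mul_inv_cancel h0 ENNReal.ofReal_ne_top, one_mul]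

theorem Wfun_mul_le_iSup (hv₁ : IsWeight v₁) (hv₂ : IsWeight v₂) (a : ℝ) (b : ℝ≥0∞) :
    Wfun v₁ v₂ a * b ≤ ⨆ E : {E // MeasurableSet E ∧ E ⊆ (ball (0 : Rn n) a)ᶜ},
      b / wMeasure v₁ E * wMeasure v₂ E := by
  rw [← ENNReal.iSup_lt_eq_self (Wfun v₁ v₂ a)]
  simp only [ENNReal.iSup_mul]
  refine iSup₂_le fun M hM => ?_
  obtain ⟨E, hEm, hEa, h0, htop, hME⟩ := exists_mul_wMeasure_le_wMeasure hv₁ hv₂ hM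
  refine le_iSup_of_le ⟨E, hEm, hEa⟩ ?_
  calc M * b = b / wMeasure v₁ E * (M * wMeasure v₁ E) := by
        rw [mul_left_comm, ENNReal.div_mul_cancel h0 htop, mul_comm]
    _ ≤ b / wMeasure v₁ E * wMeasure v₂ E := by gcongr

theorem ofReal_mul_sum_div_le_of_lhs8_le (hv₁ : IsWeight v₁) (hv₂ : IsWeight v₂) {C : ℝ≥0∞}
    (hC : ∀ g : Rn n → ℝ≥0∞, Measurable g → lhs8 u₂ v₂ g ≤ C * rhs8 u₀ u₁ v₁ g)
    {s : ℝ} (hs : 0 < s) {ι : Type*} [Fintype ι] {a : ι → ℝ} (hsa : ∀ i, s ≤ a i)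
    {b : ι → ℝ≥0∞} (hb : ∀ c, ∑ i, (if a i < c then b i else 0) ≤ ⨆ x < c, (U1fun u₀ u₁ x)⁻¹)
    {E : ι → Set (Rn n)} (hE : ∀ i, MeasurableSet (E i)) (hEa : ∀ i, E i ⊆ (ball 0 (a i))ᶜ) :
    ENNReal.ofReal (u₂ s) * ∑ i, b i / wMeasure v₁ (E i) * wMeasure v₂ (E i) ≤ C := by
  -- `g v₁` puts mass `b i` on `E i`, so by `hb` it gives mass at most `G(c⁻)` to `B(0,c)`.
  set g : Rn n → ℝ≥0∞ := fun y => ∑ i, b i / wMeasure v₁ (E i) * (E i).indicator 1 y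
  have hg : Measurable g :=
    Finset.measurable_sum _ fun i _ => (measurable_one.indicator (hE i)).const_mul _
  have hrhs : rhs8 u₀ u₁ v₁ g ≤ 1 := by
    refine rhs8_le_one fun c => ?_
    rw [setLIntegral_sum_indicator_mul hv₁ _ hE]
    refine (Finset.sum_le_sum fun i _ => ?_).trans (hb c)
    split_ifs with hac
    · calc b i / wMeasure v₁ (E i) * wMeasure v₁ (E i ∩ ball 0 c)
          ≤ b i / wMeasure v₁ (E i) * wMeasure v₁ (E i) := by
            gcongr; exact lintegral_mono_set inter_subset_left
        _ ≤ b i := by rw [mul_comm]; exact ENNReal.mul_div_le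
    · have : E i ∩ ball 0 c = ∅ := disjoint_iff_inter_eq_empty.1 <|
        disjoint_compl_left_iff_subset.2 (ball_subset_ball (not_lt.1 hac)) |>.mono_left (hEa i)
      simp [this, wMeasure]
  calc ENNReal.ofReal (u₂ s) * ∑ i, b i / wMeasure v₁ (E i) * wMeasure v₂ (E i)
      = ENNReal.ofReal (u₂ s) * ∫⁻ y in (ball 0 s)ᶜ, g y * ENNReal.ofReal (v₂ y) := by
        rw [setLIntegral_sum_indicator_mul hv₂ _ hE]
        congr 2 with i
        rw [inter_eq_left.2 ((hEa i).trans (compl_subset_compl.2 (ball_subset_ball (hsa i))))]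
    _ ≤ lhs8 u₂ v₂ g := le_iSup₂ (f := fun r (_ : 0 < r) => ENNReal.ofReal (u₂ r) *
        ∫⁻ y in (ball 0 r)ᶜ, g y * ENNReal.ofReal (v₂ y)) s hs
    _ ≤ C * rhs8 u₀ u₁ v₁ g := hC g hg
    _ ≤ C := mul_le_of_le_one_right' hrhs

theorem ofReal_mul_sum_Wfun_le_of_lhs8_le (hv₁ : IsWeight v₁) (hv₂ : IsWeight v₂) {C : ℝ≥0∞}
    (hC : ∀ g : Rn n → ℝ≥0∞, Measurable g → lhs8 u₂ v₂ g ≤ C * rhs8 u₀ u₁ v₁ g)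
    {s : ℝ} (hs : 0 < s) {ι : Type*} [Fintype ι] {a : ι → ℝ} (hsa : ∀ i, s ≤ a i)
    {b : ι → ℝ≥0∞} (hb : ∀ c, ∑ i, (if a i < c then b i else 0) ≤ ⨆ x < c, (U1fun u₀ u₁ x)⁻¹) :
    ENNReal.ofReal (u₂ s) * ∑ i, Wfun v₁ v₂ (a i) * b i ≤ C := by
  have : ∀ i, Nonempty {E // MeasurableSet E ∧ E ⊆ (ball (0 : Rn n) (a i))ᶜ} :=
    fun i => ⟨⟨∅, .empty, empty_subset _⟩⟩
  calc ENNReal.ofReal (u₂ s) * ∑ i, Wfun v₁ v₂ (a i) * b i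
      ≤ ENNReal.ofReal (u₂ s) * ∑ i, ⨆ E : {E // MeasurableSet E ∧ E ⊆ (ball (0 : Rn n) (a i))ᶜ},
          b i / wMeasure v₁ E * wMeasure v₂ E := by
        gcongr with i; exact Wfun_mul_le_iSup hv₁ hv₂ (a i) (b i)
    _ ≤ C := by
        rw [ENNReal.sum_iSup_eq_iSup_pi, ENNReal.mul_iSup]
        exact iSup_le fun E => ofReal_mul_sum_div_le_of_lhs8_le hv₁ hv₂ hC hs hsa hb
          (fun i => (E i).2.1) fun i => (E i).2.2

theorem Iconst8_le_two_mul (hv₁ : IsWeight v₁) (hv₂ : IsWeight v₂) {C : ℝ≥0∞}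
    (hC : ∀ g : Rn n → ℝ≥0∞, Measurable g → lhs8 u₂ v₂ g ≤ C * rhs8 u₀ u₁ v₁ g) :
    Iconst8 u₀ u₁ u₂ v₁ v₂ ≤ 2 * C := by
  refine iSup₂_le fun r hr => ?_
  simp only [U2fun, ENNReal.iSup_mul]
  refine iSup₂_le fun s hs => iSup_le fun hsr => ?_
  rw [mul_add, two_mul]
  refine add_le_add ?_ ?_
  -- the first term of `I` is the case of a single point mass `G r` at `r`
  · have h := ofReal_mul_sum_Wfun_le_of_lhs8_le (ι := Unit) hv₁ hv₂ hC hs (fun _ => hsr.le)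
      (b := fun _ => (U1fun u₀ u₁ r)⁻¹) fun c => by
        simp only [Fintype.sum_unique]
        split_ifs with hc
        · exact le_iSup₂ (f := fun x (_ : x < c) => (U1fun u₀ u₁ x)⁻¹) r hc
        · exact zero_le
    simpa [mul_comm (Wfun v₁ v₂ r)] using h
  · simp only [stieltjesIntegralFrom, ENNReal.mul_iSup]
    refine iSup_le fun k => iSup_le fun t => iSup₂_le fun ht hrt => ?_
    exact ofReal_mul_sum_Wfun_le_of_lhs8_le hv₁ hv₂ hC hs
      (fun i => hsr.le.trans (hrt.trans (ht.monotone (Fin.zero_le _))))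
      fun c => (sum_ite_tsub_le_iSup (fun _ _ h => ENNReal.inv_le_inv.2 (U1fun_antitone h)) c
        ht.monotone).trans (min_le_right _ _)

end Weights

theorem stmt8_general (n : ℕ) (hn : 1 ≤ n) (u₀ u₁ u₂ : ℝ → ℝ)
    (h₀p : ∀ t ∈ Ioi (0 : ℝ), 0 < u₀ t)
    (h₁p : ∀ t ∈ Ioi (0 : ℝ), 0 < u₁ t)
    (v₁ v₂ : Rn n → ℝ) (hv₁ : IsWeight v₁) (hv₂ : IsWeight v₂) :
    ((∃ C : ℝ≥0∞, C ≠ ⊤ ∧ ∀ g : Rn n → ℝ≥0∞, Measurable g →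
        lhs8 u₂ v₂ g ≤ C * rhs8 u₀ u₁ v₁ g) ↔ Iconst8 u₀ u₁ u₂ v₁ v₂ ≠ ⊤) ∧
      ∃ c₁ c₂ : ℝ≥0∞, 0 < c₁ ∧ c₂ ≠ ⊤ ∧
        c₁ * Iconst8 u₀ u₁ u₂ v₁ v₂ ≤
            sInf {C : ℝ≥0∞ | ∀ g : Rn n → ℝ≥0∞, Measurable g →
              lhs8 u₂ v₂ g ≤ C * rhs8 u₀ u₁ v₁ g} ∧
          sInf {C : ℝ≥0∞ | ∀ g : Rn n → ℝ≥0∞, Measurable g →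
              lhs8 u₂ v₂ g ≤ C * rhs8 u₀ u₁ v₁ g} ≤ c₂ * Iconst8 u₀ u₁ u₂ v₁ v₂ := by
  set I := Iconst8 u₀ u₁ u₂ v₁ v₂
  -- `+ ε` because `4 * I` fails when `I = 0` and `rhs8 = ⊤` (`0 * ⊤ = 0`)
  have hupper : ∀ ε ≠ 0, ∀ g : Rn n → ℝ≥0∞, Measurable g →
      lhs8 u₂ v₂ g ≤ (4 * I + ε) * rhs8 u₀ u₁ v₁ g := by
    intro ε hε g hg
    rcases eq_or_ne (rhs8 u₀ u₁ v₁ g) ⊤ with h | h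
    · simp [h, ENNReal.mul_top, hε]
    calc lhs8 u₂ v₂ g ≤ 4 * rhs8 u₀ u₁ v₁ g * I := lhs8_le_mul_Iconst8 hn h₀p h₁p hv₁ hv₂ hg h
      _ ≤ (4 * I + ε) * rhs8 u₀ u₁ v₁ g := by rw [mul_right_comm]; gcongr; exact le_self_add
  have hlower : ∀ C, (∀ g : Rn n → ℝ≥0∞, Measurable g → lhs8 u₂ v₂ g ≤ C * rhs8 u₀ u₁ v₁ g) →
      I ≤ 2 * C := fun _ => Iconst8_le_two_mul hv₁ hv₂
  refine ⟨⟨fun ⟨C, hC, hCg⟩ hI => ?_, fun hI => ⟨4 * I + 1, by finiteness, hupper 1 one_ne_zero⟩⟩,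
    2⁻¹, 4, by simp, by simp, le_sInf fun C hC => ?_,
    ENNReal.le_of_forall_pos_le_add fun ε hε _ => sInf_le (hupper ε (by simpa using hε.ne'))⟩
  · exact ENNReal.mul_ne_top (by simp) hC (top_le_iff.1 (hI ▸ hlower C hCg))
  · calc 2⁻¹ * I ≤ 2⁻¹ * (2 * C) := by gcongr; exact hlower C hC
      _ = C := by rw [← mul_assoc, ENNReal.inv_mul_cancel two_ne_zero ofNat_ne_top, one_mul]

/-- Theorem 5.1: characterization of the two-operator weighted norm
inequality, together with the two-sided estimate for the best constant. -/
theorem stmt8 (n : ℕ) (hn : 1 ≤ n) (u₀ u₁ u₂ : ℝ → ℝ)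
    (h₀c : ContinuousOn u₀ (Ioi 0)) (h₀p : ∀ t ∈ Ioi (0 : ℝ), 0 < u₀ t)
    (h₁c : ContinuousOn u₁ (Ioi 0)) (h₁p : ∀ t ∈ Ioi (0 : ℝ), 0 < u₁ t)
    (h₂c : ContinuousOn u₂ (Ioi 0)) (h₂p : ∀ t ∈ Ioi (0 : ℝ), 0 < u₂ t)
    (v₁ v₂ : Rn n → ℝ) (hv₁ : IsWeight v₁) (hv₂ : IsWeight v₂) :
    ((∃ C : ℝ≥0∞, C ≠ ⊤ ∧ ∀ g : Rn n → ℝ≥0∞, Measurable g →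
        lhs8 u₂ v₂ g ≤ C * rhs8 u₀ u₁ v₁ g) ↔ Iconst8 u₀ u₁ u₂ v₁ v₂ ≠ ⊤) ∧
      ∃ c₁ c₂ : ℝ≥0∞, 0 < c₁ ∧ c₂ ≠ ⊤ ∧
        c₁ * Iconst8 u₀ u₁ u₂ v₁ v₂ ≤
            sInf {C : ℝ≥0∞ | ∀ g : Rn n → ℝ≥0∞, Measurable g →
              lhs8 u₂ v₂ g ≤ C * rhs8 u₀ u₁ v₁ g} ∧
          sInf {C : ℝ≥0∞ | ∀ g : Rn n → ℝ≥0∞, Measurable g →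
              lhs8 u₂ v₂ g ≤ C * rhs8 u₀ u₁ v₁ g} ≤ c₂ * Iconst8 u₀ u₁ u₂ v₁ v₂ :=
  stmt8_general n hn u₀ u₁ u₂ h₀p h₁p v₁ v₂ hv₁ hv₂
end
end

section
/- Let 0 < β < ∞ and let u be a continuous weight function on (0,∞). Then the inequality sup_{r>0} u(r) ∫_{ℝⁿ∖B(0,r)} |y|^{−β} g(y) dy ≤ C · sup_{r>0} u(r) ( sup_{t>r} t^{−β} ∫_{B(0,t)} g(y) dy ) holds with some finite constant C for all nonnegative measurable g on ℝⁿ if and only if sup_{r>0} r^{β} · ( sup_{r<t<∞} t^{−β} ( sup_{0<s<t} u(s) ) ) · ∫_r^∞ t^{−β−1} · ( sup_{t<τ<∞} τ^{−β} ( sup_{0<s<τ} u(s) ) )^{−1} dt < ∞. -/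
open MeasureTheory ENNReal Set Metric

noncomputable section

/-- `A(r) = sup_{r<t<∞} t^{-β} · sup_{0<s<t} u(s)`. -/
def A9 (β : ℝ) (u : ℝ → ℝ) (r : ℝ) : ℝ≥0∞ :=
  ⨆ (t : ℝ) (_ : r < t),
    ENNReal.ofReal t ^ (-β) * ⨆ (s : ℝ) (_ : 0 < s) (_ : s < t), ENNReal.ofReal (u s)

/-!
Write `B(t) = sup_{0<s<t} u(s)` (`supBelow`), `A = A9 β u` and `G(t) = ∫_{B(0,t)} g`.
The right-hand side of the inequality is `sup_t t^{-β} B(t) G(t)`, which dominates `G(t) A(t)`,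
and by Fubini the left-hand side at `r` is at most `u(r) β ∫_r^∞ t^{-β-1} G(t) dt`.
Since `u(r) ≤ r^β A(r)`, a finite supremum `D` in the condition gives the inequality with
`C = β D + 1`.

Conversely, test the inequality on densities spread uniformly over the annuli of a grid starting
at `s`, with masses chosen so that `G` climbs to `A⁻¹` along the grid. Their right-hand side is at
most `1`, and refining the grid (Fatou) yields `β u(s) ∫_s^∞ t^{-β-1} A(t)⁻¹ dt ≤ C` for every
`s`. In `r^β A(r) ∫_r^∞ t^{-β-1} A(t)⁻¹ dt = sup_{τ>r} r^β τ^{-β} B(τ) (∫_r^τ + ∫_τ^∞)` the first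
piece is at most `1/β` because `A(t) ≥ τ^{-β} B(τ)` for `t ≤ τ`, and the second at most `C/β`
because `B(τ) = sup_{s<τ} u(s)`.
-/

open Filter Topology

section RealPower

lemma ofReal_rpow_neg_le {β a b : ℝ} (hβ : 0 ≤ β) (hab : a ≤ b) :
    ENNReal.ofReal b ^ (-β) ≤ ENNReal.ofReal a ^ (-β) := by
  rw [ENNReal.rpow_neg, ENNReal.rpow_neg]
  exact ENNReal.inv_le_inv.2 (ENNReal.rpow_le_rpow (ofReal_le_ofReal hab) hβ)

lemma ofReal_rpow_mul_rpow_neg (β : ℝ) {a : ℝ} (ha : 0 < a) :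
    ENNReal.ofReal a ^ β * ENNReal.ofReal a ^ (-β) = 1 := by
  rw [← ENNReal.rpow_add _ _ (ofReal_pos.2 ha).ne' ofReal_ne_top, add_neg_cancel,
    ENNReal.rpow_zero]

lemma ofReal_rpow_le_iSup_Ioi (r y : ℝ) :
    ENNReal.ofReal r ^ y ≤ ⨆ (t : ℝ) (_ : r < t), ENNReal.ofReal t ^ y := by
  have hcont : Tendsto (fun t : ℝ => ENNReal.ofReal t ^ y) (𝓝[>] r)
      (𝓝 (ENNReal.ofReal r ^ y)) :=
    ((ENNReal.continuous_rpow_const.comp ENNReal.continuous_ofReal).tendsto r).mono_left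
      nhdsWithin_le_nhds
  exact le_of_tendsto hcont
    (eventually_nhdsWithin_of_forall fun t ht => le_iSup₂_of_le t ht le_rfl)

lemma ofReal_mul_lintegral_Ioi_rpow {β a : ℝ} (hβ : 0 < β) (ha : 0 < a) :
    ENNReal.ofReal β * ∫⁻ t in Ioi a, ENNReal.ofReal t ^ (-β - 1) =
      ENNReal.ofReal a ^ (-β) := by
  have hint : IntegrableOn (fun t : ℝ => t ^ (-β - 1)) (Ioi a) :=
    integrableOn_Ioi_rpow_of_lt (by linarith) ha
  have hnonneg : 0 ≤ᵐ[volume.restrict (Ioi a)] fun t : ℝ => t ^ (-β - 1) :=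
    ae_restrict_of_forall_mem measurableSet_Ioi fun t ht => Real.rpow_nonneg (ha.trans ht).le _
  rw [setLIntegral_congr_fun measurableSet_Ioi fun t ht => ofReal_rpow_of_pos (ha.trans ht),
    ← ofReal_integral_eq_lintegral_ofReal hint hnonneg, integral_Ioi_rpow_of_lt (by linarith) ha,
    ← ENNReal.ofReal_mul hβ.le, ofReal_rpow_of_pos ha, sub_add_cancel]
  congr 1
  field_simp

end RealPower

section Weight

variable {β : ℝ} {u : ℝ → ℝ}

def supBelow (u : ℝ → ℝ) (t : ℝ) : ℝ≥0∞ :=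
  ⨆ (s : ℝ) (_ : 0 < s) (_ : s < t), ENNReal.ofReal (u s)

lemma A9_eq (β : ℝ) (u : ℝ → ℝ) (r : ℝ) :
    A9 β u r = ⨆ (t : ℝ) (_ : r < t), ENNReal.ofReal t ^ (-β) * supBelow u t := rfl

lemma supBelow_mono : Monotone (supBelow u) := fun _ _ hab =>
  iSup₂_mono fun _ _ => iSup_mono' fun h => ⟨h.trans_le hab, le_rfl⟩

lemma ofReal_le_supBelow {s t : ℝ} (hs : 0 < s) (hst : s < t) :
    ENNReal.ofReal (u s) ≤ supBelow u t :=
  le_iSup₂_of_le s hs (le_iSup_of_le hst le_rfl)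

lemma A9_antitone : Antitone (A9 β u) := fun a b hab => by
  rw [A9_eq, A9_eq]
  exact iSup₂_le fun t ht => le_iSup₂_of_le t (hab.trans_lt ht) le_rfl

lemma rpow_mul_le_A9 {r : ℝ} {c : ℝ≥0∞} (hc : ∀ t, r < t → c ≤ supBelow u t) :
    ENNReal.ofReal r ^ (-β) * c ≤ A9 β u r :=
  calc ENNReal.ofReal r ^ (-β) * c
      ≤ (⨆ (t : ℝ) (_ : r < t), ENNReal.ofReal t ^ (-β)) * c :=
        mul_le_mul_left (ofReal_rpow_le_iSup_Ioi r (-β)) c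
    _ = ⨆ (t : ℝ) (_ : r < t), ENNReal.ofReal t ^ (-β) * c := by simp only [ENNReal.iSup_mul]
    _ ≤ A9 β u r := iSup₂_mono fun t ht => mul_le_mul_right (hc t ht) _

lemma rpow_mul_supBelow_self_le_A9 (r : ℝ) :
    ENNReal.ofReal r ^ (-β) * supBelow u r ≤ A9 β u r :=
  rpow_mul_le_A9 fun _ ht => supBelow_mono ht.le

lemma ofReal_le_rpow_mul_A9 {r : ℝ} (hr : 0 < r) :
    ENNReal.ofReal (u r) ≤ ENNReal.ofReal r ^ β * A9 β u r :=
  calc ENNReal.ofReal (u r)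
      = ENNReal.ofReal r ^ β * (ENNReal.ofReal r ^ (-β) * ENNReal.ofReal (u r)) := by
        rw [← mul_assoc, ofReal_rpow_mul_rpow_neg β hr, one_mul]
    _ ≤ ENNReal.ofReal r ^ β * A9 β u r :=
        mul_le_mul_right (rpow_mul_le_A9 fun _ ht => ofReal_le_supBelow hr ht) _

lemma A9_ne_zero {r : ℝ} (hr : 0 < r) (hu : 0 < u r) : A9 β u r ≠ 0 := by
  intro h
  have := ofReal_le_rpow_mul_A9 (β := β) (u := u) hr
  rw [h, mul_zero, nonpos_iff_eq_zero, ofReal_eq_zero] at this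
  linarith

end Weight

section WeightedSup

variable {β : ℝ} {u : ℝ → ℝ}

def weightedSup (β : ℝ) (u : ℝ → ℝ) (G : ℝ → ℝ≥0∞) : ℝ≥0∞ :=
  ⨆ (r : ℝ) (_ : 0 < r),
    ENNReal.ofReal (u r) * ⨆ (t : ℝ) (_ : r < t), ENNReal.ofReal t ^ (-β) * G t

lemma mul_A9_le_weightedSup {G : ℝ → ℝ≥0∞} (hG : Monotone G) (t : ℝ) :
    G t * A9 β u t ≤ weightedSup β u G := by
  rw [A9_eq, ENNReal.mul_iSup]
  refine iSup_le fun τ => ?_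
  rw [ENNReal.mul_iSup]
  refine iSup_le fun hτ => ?_
  simp only [supBelow, ENNReal.mul_iSup]
  refine iSup₂_le fun s hs => iSup_le fun hsτ => ?_
  calc G t * (ENNReal.ofReal τ ^ (-β) * ENNReal.ofReal (u s))
      = ENNReal.ofReal (u s) * (ENNReal.ofReal τ ^ (-β) * G t) := by ring
    _ ≤ ENNReal.ofReal (u s) * (ENNReal.ofReal τ ^ (-β) * G τ) := by gcongr; exact hG hτ.le
    _ ≤ weightedSup β u G :=
        le_iSup₂_of_le s hs (mul_le_mul_right
          (le_iSup₂_of_le (f := fun t _ => ENNReal.ofReal t ^ (-β) * G t) τ hsτ le_rfl) _)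

lemma weightedSup_le_one {G : ℝ → ℝ≥0∞} (hG : ∀ t, G t ≤ (A9 β u t)⁻¹) :
    weightedSup β u G ≤ 1 := by
  refine iSup₂_le fun r hr => ?_
  rw [ENNReal.mul_iSup]
  refine iSup_le fun t => ?_
  rw [ENNReal.mul_iSup]
  refine iSup_le fun hrt => ?_
  calc ENNReal.ofReal (u r) * (ENNReal.ofReal t ^ (-β) * G t)
      ≤ supBelow u t * (ENNReal.ofReal t ^ (-β) * (A9 β u t)⁻¹) :=
        mul_le_mul' (ofReal_le_supBelow hr hrt) (mul_le_mul_right (hG t) _)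
    _ = ENNReal.ofReal t ^ (-β) * supBelow u t * (A9 β u t)⁻¹ := by ring
    _ ≤ A9 β u t * (A9 β u t)⁻¹ := mul_le_mul_left (rpow_mul_supBelow_self_le_A9 t) _
    _ ≤ 1 := ENNReal.mul_inv_le_one _

def dualIntegral (β : ℝ) (u : ℝ → ℝ) (r : ℝ) : ℝ≥0∞ :=
  ∫⁻ t in Ioi r, ENNReal.ofReal t ^ (-β - 1) * (A9 β u t)⁻¹

def dualSup (β : ℝ) (u : ℝ → ℝ) : ℝ≥0∞ :=
  ⨆ (r : ℝ) (_ : 0 < r), ENNReal.ofReal r ^ β * A9 β u r * dualIntegral β u r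

lemma dualIntegral_antitone : Antitone (dualIntegral β u) := fun _ _ hab =>
  lintegral_mono_set (Ioi_subset_Ioi hab)

lemma dualIntegral_eq_add {r τ : ℝ} (hrτ : r ≤ τ) :
    dualIntegral β u r =
      (∫⁻ t in Ioc r τ, ENNReal.ofReal t ^ (-β - 1) * (A9 β u t)⁻¹) +
        dualIntegral β u τ := by
  rw [dualIntegral, dualIntegral, ← Ioc_union_Ioi_eq_Ioi hrτ,
    lintegral_union measurableSet_Ioi (Ioc_disjoint_Ioi le_rfl)]

lemma ofReal_mul_rpow_mul_setLIntegral_Ioc_le (hβ : 0 < β) {r τ : ℝ} (hr : 0 < r) :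
    ENNReal.ofReal β * (ENNReal.ofReal r ^ β * (ENNReal.ofReal τ ^ (-β) * supBelow u τ) *
      ∫⁻ t in Ioc r τ, ENNReal.ofReal t ^ (-β - 1) * (A9 β u t)⁻¹) ≤ 1 := by
  set a := ENNReal.ofReal τ ^ (-β) * supBelow u τ
  have hint : a * ∫⁻ t in Ioc r τ, ENNReal.ofReal t ^ (-β - 1) * (A9 β u t)⁻¹ ≤
      ∫⁻ t in Ioi r, ENNReal.ofReal t ^ (-β - 1) := by
    refine (lintegral_const_mul_le _ _).trans ?_
    refine (setLIntegral_mono' measurableSet_Ioc fun t ht => ?_).trans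
      (lintegral_mono_set Ioc_subset_Ioi_self)
    have ha : a ≤ A9 β u t := (rpow_mul_supBelow_self_le_A9 τ).trans (A9_antitone ht.2)
    calc a * (ENNReal.ofReal t ^ (-β - 1) * (A9 β u t)⁻¹)
        = ENNReal.ofReal t ^ (-β - 1) * (a * (A9 β u t)⁻¹) := by ring
      _ ≤ ENNReal.ofReal t ^ (-β - 1) * (A9 β u t * (A9 β u t)⁻¹) := by gcongr
      _ ≤ ENNReal.ofReal t ^ (-β - 1) * 1 := by gcongr; exact ENNReal.mul_inv_le_one _
      _ = ENNReal.ofReal t ^ (-β - 1) := mul_one _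
  calc ENNReal.ofReal β * (ENNReal.ofReal r ^ β * a *
        ∫⁻ t in Ioc r τ, ENNReal.ofReal t ^ (-β - 1) * (A9 β u t)⁻¹)
      = ENNReal.ofReal r ^ β * (ENNReal.ofReal β *
          (a * ∫⁻ t in Ioc r τ, ENNReal.ofReal t ^ (-β - 1) * (A9 β u t)⁻¹)) := by ring
    _ ≤ ENNReal.ofReal r ^ β *
          (ENNReal.ofReal β * ∫⁻ t in Ioi r, ENNReal.ofReal t ^ (-β - 1)) := by gcongr
    _ = 1 := by rw [ofReal_mul_lintegral_Ioi_rpow hβ hr, ofReal_rpow_mul_rpow_neg β hr]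

lemma ofReal_mul_supBelow_mul_dualIntegral_le {K : ℝ≥0∞}
    (hK : ∀ s, 0 < s → ENNReal.ofReal β * (ENNReal.ofReal (u s) * dualIntegral β u s) ≤ K)
    (τ : ℝ) : ENNReal.ofReal β * (supBelow u τ * dualIntegral β u τ) ≤ K := by
  simp only [supBelow, ENNReal.iSup_mul, ENNReal.mul_iSup]
  refine iSup₂_le fun s hs => iSup_le fun hsτ => (hK s hs).trans' ?_
  gcongr
  exact dualIntegral_antitone hsτ.le

lemma ofReal_mul_rpow_mul_A9_mul_dualIntegral_le (hβ : 0 < β) {K : ℝ≥0∞}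
    (hK : ∀ s, 0 < s → ENNReal.ofReal β * (ENNReal.ofReal (u s) * dualIntegral β u s) ≤ K)
    {r : ℝ} (hr : 0 < r) :
    ENNReal.ofReal β * (ENNReal.ofReal r ^ β * A9 β u r * dualIntegral β u r) ≤ 1 + K := by
  simp only [A9_eq, ENNReal.mul_iSup, ENNReal.iSup_mul]
  refine iSup₂_le fun τ hrτ => ?_
  have hscale : ENNReal.ofReal r ^ β * ENNReal.ofReal τ ^ (-β) ≤ 1 :=
    calc ENNReal.ofReal r ^ β * ENNReal.ofReal τ ^ (-β)
        ≤ ENNReal.ofReal τ ^ β * ENNReal.ofReal τ ^ (-β) := by gcongr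
      _ = 1 := ofReal_rpow_mul_rpow_neg β (hr.trans hrτ)
  rw [dualIntegral_eq_add hrτ.le, mul_add, mul_add]
  gcongr
  · exact ofReal_mul_rpow_mul_setLIntegral_Ioc_le hβ hr
  · calc ENNReal.ofReal β * (ENNReal.ofReal r ^ β *
          (ENNReal.ofReal τ ^ (-β) * supBelow u τ) * dualIntegral β u τ)
        = ENNReal.ofReal r ^ β * ENNReal.ofReal τ ^ (-β) *
            (ENNReal.ofReal β * (supBelow u τ * dualIntegral β u τ)) := by ring
      _ ≤ 1 * K := mul_le_mul' hscale (ofReal_mul_supBelow_mul_dualIntegral_le hK τ)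
      _ = K := one_mul K

lemma dualSup_ne_top_of_forall_le (hβ : 0 < β) {K : ℝ≥0∞} (hK_top : K ≠ ⊤)
    (hK : ∀ s, 0 < s → ENNReal.ofReal β * (ENNReal.ofReal (u s) * dualIntegral β u s) ≤ K) :
    dualSup β u ≠ ⊤ := by
  have hβ0 : ENNReal.ofReal β ≠ 0 := (ofReal_pos.2 hβ).ne'
  refine ne_top_of_le_ne_top (b := (1 + K) / ENNReal.ofReal β)
    (ENNReal.div_ne_top (ENNReal.add_ne_top.2 ⟨one_ne_top, hK_top⟩) hβ0) ?_
  refine iSup₂_le fun r hr => ?_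
  rw [ENNReal.le_div_iff_mul_le (Or.inl hβ0) (Or.inl ofReal_ne_top), mul_comm]
  exact ofReal_mul_rpow_mul_A9_mul_dualIntegral_le hβ hK hr

end WeightedSup

section TailIntegral

variable {E : Type*} [NormedAddCommGroup E] [MeasurableSpace E] (μ : Measure E) {β : ℝ}

def tailIntegral (μ : Measure E) (β : ℝ) (g : E → ℝ≥0∞) (r : ℝ) : ℝ≥0∞ :=
  ∫⁻ y in (ball (0 : E) r)ᶜ, ENNReal.ofReal ‖y‖ ^ (-β) * g y ∂μ

def ballIntegral (μ : Measure E) (g : E → ℝ≥0∞) (t : ℝ) : ℝ≥0∞ :=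
  ∫⁻ y in ball (0 : E) t, g y ∂μ

lemma ballIntegral_mono (g : E → ℝ≥0∞) : Monotone (ballIntegral μ g) := fun _ _ hab =>
  lintegral_mono_set (ball_subset_ball hab)

/-- Write `‖y‖^{-β} = β ∫_{‖y‖}^∞ t^{-β-1} dt` and exchange the order of integration. -/
lemma tailIntegral_le [OpensMeasurableSpace E] [SFinite μ] (hβ : 0 < β) {r : ℝ} (hr : 0 < r)
    {g : E → ℝ≥0∞} (hg : Measurable g) :
    tailIntegral μ β g r ≤
      ENNReal.ofReal β * ∫⁻ t in Ioi r, ENNReal.ofReal t ^ (-β - 1) * ballIntegral μ g t := by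
  set F : E → ℝ → ℝ≥0∞ := fun y t =>
    (if ‖y‖ < t then ENNReal.ofReal t ^ (-β - 1) else 0) * g y
  have hw : Measurable fun t : ℝ => ENNReal.ofReal t ^ (-β - 1) :=
    ENNReal.measurable_ofReal.pow_const _
  have hF : Measurable (Function.uncurry F) :=
    (Measurable.ite (measurableSet_lt measurable_fst.norm measurable_snd)
      (hw.comp measurable_snd) measurable_const).mul (hg.comp measurable_fst)
  have hinner : ∀ y ∈ (ball (0 : E) r)ᶜ,
      ENNReal.ofReal ‖y‖ ^ (-β) * g y = ENNReal.ofReal β * ∫⁻ t in Ioi r, F y t := by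
    intro y hy
    have hry : r ≤ ‖y‖ := by simpa using hy
    have hind : (fun t => if ‖y‖ < t then ENNReal.ofReal t ^ (-β - 1) else 0) =
        (Ioi ‖y‖).indicator fun t => ENNReal.ofReal t ^ (-β - 1) := by
      ext t; simp [indicator_apply]
    rw [lintegral_mul_const _ (hind ▸ hw.indicator measurableSet_Ioi), hind,
      lintegral_indicator measurableSet_Ioi, Measure.restrict_restrict measurableSet_Ioi,
      inter_eq_left.2 (Ioi_subset_Ioi hry), ← mul_assoc,
      ofReal_mul_lintegral_Ioi_rpow hβ (hr.trans_le hry)]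
  have houter : ∀ t ∈ Ioi r, ∫⁻ y in (ball (0 : E) r)ᶜ, F y t ∂μ ≤
      ENNReal.ofReal t ^ (-β - 1) * ballIntegral μ g t := by
    intro t _
    have hind : (fun y => F y t) =
        (ball (0 : E) t).indicator fun y => ENNReal.ofReal t ^ (-β - 1) * g y := by
      ext y; by_cases h : ‖y‖ < t <;> simp [F, h]
    rw [hind, ballIntegral, ← lintegral_const_mul _ hg,
      ← lintegral_indicator measurableSet_ball]
    exact setLIntegral_le_lintegral _ _
  calc tailIntegral μ β g r
      = ∫⁻ y in (ball (0 : E) r)ᶜ, ENNReal.ofReal β * (∫⁻ t in Ioi r, F y t) ∂μ :=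
        setLIntegral_congr_fun measurableSet_ball.compl hinner
    _ = ENNReal.ofReal β * ∫⁻ t in Ioi r, (∫⁻ y in (ball (0 : E) r)ᶜ, F y t ∂μ) := by
        rw [lintegral_const_mul' _ _ ofReal_ne_top, lintegral_lintegral_swap hF.aemeasurable]
    _ ≤ ENNReal.ofReal β * ∫⁻ t in Ioi r, ENNReal.ofReal t ^ (-β - 1) * ballIntegral μ g t :=
        mul_le_mul_right (setLIntegral_mono' measurableSet_Ioi houter) _

lemma exists_tail_le_of_dualSup_ne_top [OpensMeasurableSpace E] [SFinite μ] (hβ : 0 < β)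
    {u : ℝ → ℝ} (hup : ∀ t, 0 < t → 0 < u t) (hD : dualSup β u ≠ ⊤) :
    ∃ C : ℝ≥0∞, C ≠ ⊤ ∧ ∀ g : E → ℝ≥0∞, Measurable g →
      (⨆ (r : ℝ) (_ : 0 < r), ENNReal.ofReal (u r) * tailIntegral μ β g r) ≤
        C * weightedSup β u (ballIntegral μ g) := by
  refine ⟨ENNReal.ofReal β * dualSup β u + 1,
    ENNReal.add_ne_top.2 ⟨ENNReal.mul_ne_top ofReal_ne_top hD, one_ne_top⟩, fun g hg => ?_⟩
  set R := weightedSup β u (ballIntegral μ g)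
  rcases eq_or_ne R ⊤ with hR | hR
  · rw [hR, ENNReal.mul_top (by positivity)]
    exact le_top
  refine iSup₂_le fun r hr => ?_
  have hG : ∀ t ∈ Ioi r, ENNReal.ofReal t ^ (-β - 1) * ballIntegral μ g t ≤
      R * (ENNReal.ofReal t ^ (-β - 1) * (A9 β u t)⁻¹) := by
    intro t ht
    have hA := A9_ne_zero (β := β) (hr.trans ht) (hup t (hr.trans ht))
    have hle : ballIntegral μ g t ≤ R / A9 β u t :=
      (ENNReal.le_div_iff_mul_le (Or.inl hA) (Or.inr hR)).2
        (mul_A9_le_weightedSup (ballIntegral_mono μ g) t)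
    calc ENNReal.ofReal t ^ (-β - 1) * ballIntegral μ g t
        ≤ ENNReal.ofReal t ^ (-β - 1) * (R / A9 β u t) := by gcongr
      _ = R * (ENNReal.ofReal t ^ (-β - 1) * (A9 β u t)⁻¹) := by rw [div_eq_mul_inv]; ring
  calc ENNReal.ofReal (u r) * tailIntegral μ β g r
      ≤ ENNReal.ofReal (u r) * (ENNReal.ofReal β *
          ∫⁻ t in Ioi r, R * (ENNReal.ofReal t ^ (-β - 1) * (A9 β u t)⁻¹)) :=
        mul_le_mul_right ((tailIntegral_le μ hβ hr hg).trans
          (mul_le_mul_right (setLIntegral_mono' measurableSet_Ioi hG) _)) _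
    _ = ENNReal.ofReal β * (ENNReal.ofReal (u r) * dualIntegral β u r) * R := by
        rw [lintegral_const_mul' _ _ hR, dualIntegral]; ring
    _ ≤ ENNReal.ofReal β * (ENNReal.ofReal r ^ β * A9 β u r * dualIntegral β u r) * R := by
        gcongr
        exact ofReal_le_rpow_mul_A9 hr
    _ ≤ (ENNReal.ofReal β * dualSup β u + 1) * R := by
        refine mul_le_mul_left (le_add_right (mul_le_mul_right ?_ _)) _
        exact le_iSup₂_of_le (f := fun r _ => ENNReal.ofReal r ^ β * A9 β u r *
          dualIntegral β u r) r hr le_rfl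

end TailIntegral

section Annulus

variable {E : Type*} [NormedAddCommGroup E]

def annulus (a b : ℝ) : Set E := ball 0 b \ ball 0 a

lemma mem_annulus {a b : ℝ} {y : E} : y ∈ annulus a b ↔ a ≤ ‖y‖ ∧ ‖y‖ < b := by
  simp [annulus, and_comm]

variable [MeasurableSpace E] (μ : Measure E)

lemma measure_annulus_pos [NormedSpace ℝ E] [Nontrivial E] [μ.IsOpenPosMeasure] {a b : ℝ}
    (ha : 0 ≤ a) (hab : a < b) : 0 < μ (annulus a b) := by
  obtain ⟨z, hz⟩ := exists_norm_eq E (c := (a + b) / 2) (by linarith)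
  have hopen : IsOpen {y : E | a < ‖y‖ ∧ ‖y‖ < b} :=
    (isOpen_lt continuous_const continuous_norm).inter (isOpen_lt continuous_norm continuous_const)
  refine (hopen.measure_pos μ ⟨z, by constructor <;> linarith⟩).trans_le (measure_mono ?_)
  exact fun y hy => mem_annulus.2 ⟨hy.1.le, hy.2⟩

lemma measure_annulus_ne_top [ProperSpace E] [IsFiniteMeasureOnCompacts μ] (a b : ℝ) :
    μ (annulus a b) ≠ ⊤ :=
  (measure_mono_top sdiff_subset).mt measure_ball_lt_top.ne

variable [OpensMeasurableSpace E]

lemma measurableSet_annulus (a b : ℝ) : MeasurableSet (annulus a b : Set E) :=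
  measurableSet_ball.diff measurableSet_ball

def annulusDensity (a b : ℝ) (y : E) : ℝ≥0∞ :=
  (μ (annulus a b))⁻¹ * (annulus a b).indicator 1 y

lemma measurable_annulusDensity (a b : ℝ) : Measurable (annulusDensity μ a b) :=
  measurable_const.mul (measurable_one.indicator (measurableSet_annulus a b))

lemma setLIntegral_annulusDensity (a b : ℝ) (S : Set E) :
    ∫⁻ y in S, annulusDensity μ a b y ∂μ =
      (μ (annulus a b))⁻¹ * μ (annulus a b ∩ S) := by
  simp only [annulusDensity]
  rw [lintegral_const_mul _ (measurable_one.indicator (measurableSet_annulus a b)),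
    lintegral_indicator_one (measurableSet_annulus a b),
    Measure.restrict_apply (measurableSet_annulus a b)]

lemma ballIntegral_annulusDensity_le (a b t : ℝ) :
    ballIntegral μ (annulusDensity μ a b) t ≤ (Ioi a).indicator 1 t := by
  rw [ballIntegral, setLIntegral_annulusDensity]
  by_cases ht : a < t
  · rw [indicator_of_mem (show t ∈ Ioi a from ht), Pi.one_apply, mul_comm]
    exact (mul_le_mul_left (measure_mono inter_subset_left) _).trans (ENNReal.mul_inv_le_one _)
  · have hempty : annulus a b ∩ ball (0 : E) t = ∅ := by
      refine eq_empty_iff_forall_notMem.2 fun y hy => ?_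
      have hy' := mem_annulus.1 hy.1
      have : ‖y‖ < t := by simpa using hy.2
      linarith
    simp [hempty]

lemma rpow_le_tailIntegral_annulusDensity [NormedSpace ℝ E] [Nontrivial E] [ProperSpace E]
    [μ.IsOpenPosMeasure] [IsFiniteMeasureOnCompacts μ] {β s a b : ℝ} (hβ : 0 ≤ β) (hs : s ≤ a)
    (ha : 0 ≤ a) (hab : a < b) :
    ENNReal.ofReal b ^ (-β) ≤ tailIntegral μ β (annulusDensity μ a b) s := by
  have hsub : annulus a b ⊆ (ball (0 : E) s)ᶜ := fun y hy => by
    simpa using hs.trans (mem_annulus.1 hy).1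
  have hle : ∀ y, ENNReal.ofReal b ^ (-β) * (annulus a b).indicator 1 y ≤
      (ball (0 : E) s)ᶜ.indicator (fun y => ENNReal.ofReal ‖y‖ ^ (-β) *
        (annulus a b).indicator 1 y) y := by
    intro y
    by_cases hy : y ∈ annulus a b
    · rw [indicator_of_mem (hsub hy), indicator_of_mem hy]
      exact mul_le_mul_left (ofReal_rpow_neg_le hβ (mem_annulus.1 hy).2.le) _
    · simp [hy]
  calc ENNReal.ofReal b ^ (-β)
      = ENNReal.ofReal b ^ (-β) * ((μ (annulus a b))⁻¹ * μ (annulus a b)) := by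
        rw [ENNReal.inv_mul_cancel (measure_annulus_pos μ ha hab).ne'
          (measure_annulus_ne_top μ a b), mul_one]
    _ = (μ (annulus a b))⁻¹ *
          ∫⁻ y, ENNReal.ofReal b ^ (-β) * (annulus a b).indicator 1 y ∂μ := by
        rw [lintegral_const_mul _ (measurable_one.indicator (measurableSet_annulus a b)),
          lintegral_indicator_one (measurableSet_annulus a b)]
        ring
    _ ≤ (μ (annulus a b))⁻¹ * ∫⁻ y in (ball (0 : E) s)ᶜ,
          ENNReal.ofReal ‖y‖ ^ (-β) * (annulus a b).indicator 1 y ∂μ := by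
        rw [← lintegral_indicator measurableSet_ball.compl]
        exact mul_le_mul_right (lintegral_mono hle) _
    _ = tailIntegral μ β (annulusDensity μ a b) s := by
        have hmeas : Measurable fun y : E =>
            ENNReal.ofReal ‖y‖ ^ (-β) * (annulus a b).indicator 1 y :=
          ((ENNReal.measurable_ofReal.comp measurable_norm).pow_const _).mul
            (measurable_one.indicator (measurableSet_annulus a b))
        rw [tailIntegral, ← lintegral_const_mul _ hmeas]
        refine lintegral_congr fun y => ?_
        simp only [annulusDensity]
        ring

end Annulus

section Layered

variable {E : Type*} [NormedAddCommGroup E] [MeasurableSpace E] [OpensMeasurableSpace E]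
  (μ : Measure E)

def layeredDensity (q : ℕ → ℝ) (d : ℕ → ℝ≥0∞) (y : E) : ℝ≥0∞ :=
  ∑' k, d k * annulusDensity μ (q k) (q (k + 1)) y

lemma measurable_layeredDensity (q : ℕ → ℝ) (d : ℕ → ℝ≥0∞) :
    Measurable (layeredDensity μ q d) :=
  Measurable.tsum fun _ => measurable_const.mul (measurable_annulusDensity μ _ _)

lemma ballIntegral_layeredDensity_le (q : ℕ → ℝ) (d : ℕ → ℝ≥0∞) (t : ℝ) :
    ballIntegral μ (layeredDensity μ q d) t ≤ ∑' k, d k * (Ioi (q k)).indicator 1 t := by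
  simp only [ballIntegral, layeredDensity]
  rw [lintegral_tsum fun _ => ((measurable_annulusDensity μ _ _).const_mul _).aemeasurable]
  refine ENNReal.tsum_le_tsum fun k => ?_
  rw [lintegral_const_mul _ (measurable_annulusDensity μ _ _)]
  exact mul_le_mul_right (ballIntegral_annulusDensity_le μ _ _ t) _

lemma tsum_le_tailIntegral_layeredDensity [NormedSpace ℝ E] [Nontrivial E] [ProperSpace E]
    [μ.IsOpenPosMeasure] [IsFiniteMeasureOnCompacts μ] {β : ℝ} (hβ : 0 ≤ β) {q : ℕ → ℝ}
    (hq : StrictMono q) (hq0 : 0 ≤ q 0) (d : ℕ → ℝ≥0∞) :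
    ∑' k, d k * ENNReal.ofReal (q (k + 1)) ^ (-β) ≤
      tailIntegral μ β (layeredDensity μ q d) (q 0) := by
  have hmeas : ∀ k, Measurable fun y : E =>
      ENNReal.ofReal ‖y‖ ^ (-β) * annulusDensity μ (q k) (q (k + 1)) y := fun k =>
    ((ENNReal.measurable_ofReal.comp measurable_norm).pow_const _).mul
      (measurable_annulusDensity μ _ _)
  simp only [tailIntegral, layeredDensity, ← ENNReal.tsum_mul_left]
  rw [lintegral_tsum fun k => ((hmeas k).const_mul (d k)).aemeasurable.congr
    (ae_of_all _ fun y => by ring)]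
  refine ENNReal.tsum_le_tsum fun k => ?_
  have hk := rpow_le_tailIntegral_annulusDensity μ hβ (hq.monotone (Nat.zero_le k))
    (hq0.trans (hq.monotone (Nat.zero_le k))) (hq (Nat.lt_succ_self k))
  calc d k * ENNReal.ofReal (q (k + 1)) ^ (-β)
      ≤ d k * tailIntegral μ β (annulusDensity μ (q k) (q (k + 1))) (q 0) :=
        mul_le_mul_right hk _
    _ = _ := by
        rw [tailIntegral, ← lintegral_const_mul _ (hmeas k)]
        exact lintegral_congr fun y => by ring

end Layered

section Grid

lemma sum_range_tsub_of_monotone {M : Type*} [AddCommMonoid M] [PartialOrder M]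
    [CanonicallyOrderedAdd M] [Sub M] [OrderedSub M] {h : ℕ → M} (hh : Monotone h)
    (h0 : h 0 = 0) (N : ℕ) : ∑ k ∈ Finset.range N, (h (k + 1) - h k) = h N := by
  induction N with
  | zero => simp [h0]
  | succ N ih => rw [Finset.sum_range_succ, ih, add_tsub_cancel_of_le (hh N.le_succ)]

variable {F : ℝ → ℝ≥0∞} {q : ℕ → ℝ}

/-- The leading `0` makes the first increment `F (q 0)`. -/
def gridHeight (F : ℝ → ℝ≥0∞) (q : ℕ → ℝ) : ℕ → ℝ≥0∞
  | 0 => 0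
  | i + 1 => F (q i)

lemma gridHeight_mono (hF : Monotone F) (hq : Monotone q) : Monotone (gridHeight F q) :=
  monotone_nat_of_le_succ fun i => by
    cases i with
    | zero => exact zero_le
    | succ i => exact hF (hq i.le_succ)

def gridIncr (F : ℝ → ℝ≥0∞) (q : ℕ → ℝ) (k : ℕ) : ℝ≥0∞ :=
  gridHeight F q (k + 1) - gridHeight F q k

lemma sum_range_gridIncr (hF : Monotone F) (hq : Monotone q) (j : ℕ) :
    ∑ k ∈ Finset.range j, gridIncr F q k = gridHeight F q j :=
  sum_range_tsub_of_monotone (gridHeight_mono hF hq) rfl j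

/-- Each term is at most the increment of `min (gridHeight F q ·) (F t)`, which telescopes. -/
lemma tsum_gridIncr_mul_indicator_le (hF : Monotone F) (hq : Monotone q) (t : ℝ) :
    ∑' k, gridIncr F q k * (Ioi (q k)).indicator 1 t ≤ F t := by
  set h : ℕ → ℝ≥0∞ := fun i => min (gridHeight F q i) (F t)
  have hh : Monotone h := fun i j hij => min_le_min_right _ (gridHeight_mono hF hq hij)
  have hterm : ∀ k, gridIncr F q k * (Ioi (q k)).indicator 1 t ≤ h (k + 1) - h k := by
    intro k
    by_cases hk : q k < t
    · have h1 : gridHeight F q (k + 1) ≤ F t := hF hk.le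
      have h0 : gridHeight F q k ≤ F t := (gridHeight_mono hF hq k.le_succ).trans h1
      simp [h, gridIncr, indicator_of_mem (show t ∈ Ioi (q k) from hk), min_eq_left h1,
        min_eq_left h0]
    · simp [indicator_of_notMem (show t ∉ Ioi (q k) from hk)]
  refine ENNReal.tsum_le_of_sum_range_le fun N => ?_
  calc ∑ k ∈ Finset.range N, gridIncr F q k * (Ioi (q k)).indicator 1 t
      ≤ ∑ k ∈ Finset.range N, (h (k + 1) - h k) := Finset.sum_le_sum fun k _ => hterm k
    _ = h N := sum_range_tsub_of_monotone hh (by simp [h, gridHeight]) N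
    _ ≤ F t := min_le_right _ _

def stepApprox (F : ℝ → ℝ≥0∞) (q : ℕ → ℝ) (t : ℝ) : ℝ≥0∞ :=
  ∑' k, gridIncr F q k * (Ioi (q (k + 1))).indicator 1 t

lemma measurable_stepApprox : Measurable (stepApprox F q) :=
  Measurable.tsum fun _ => measurable_const.mul (measurable_one.indicator measurableSet_Ioi)

lemma ofReal_mul_lintegral_stepApprox {β s : ℝ} (hβ : 0 < β) (hs : 0 < s)
    (hq : ∀ k, s ≤ q k) :
    ENNReal.ofReal β * ∫⁻ t in Ioi s, ENNReal.ofReal t ^ (-β - 1) * stepApprox F q t =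
      ∑' k, gridIncr F q k * ENNReal.ofReal (q (k + 1)) ^ (-β) := by
  have hw : Measurable fun t : ℝ => ENNReal.ofReal t ^ (-β - 1) :=
    ENNReal.measurable_ofReal.pow_const _
  have hterm : ∀ k t,
      ENNReal.ofReal t ^ (-β - 1) * (gridIncr F q k * (Ioi (q (k + 1))).indicator 1 t) =
        gridIncr F q k * (Ioi (q (k + 1))).indicator (fun t => ENNReal.ofReal t ^ (-β - 1)) t := by
    intro k t
    by_cases ht : t ∈ Ioi (q (k + 1)) <;> simp [ht, mul_comm]
  simp only [stepApprox, ← ENNReal.tsum_mul_left, hterm]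
  rw [lintegral_tsum fun k => ((hw.indicator measurableSet_Ioi).const_mul _).aemeasurable,
    ← ENNReal.tsum_mul_left]
  refine tsum_congr fun k => ?_
  rw [lintegral_const_mul _ (hw.indicator measurableSet_Ioi),
    lintegral_indicator measurableSet_Ioi, Measure.restrict_restrict measurableSet_Ioi,
    inter_eq_left.2 (Ioi_subset_Ioi (hq _)), mul_left_comm,
    ofReal_mul_lintegral_Ioi_rpow hβ (hs.trans_le (hq _))]

lemma le_stepApprox (hF : Monotone F) (hq : Monotone q) {t : ℝ} {j : ℕ} (hj : q (j + 1) < t) :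
    F (q j) ≤ stepApprox F q t :=
  calc F (q j) = ∑ k ∈ Finset.range (j + 1), gridIncr F q k :=
        (sum_range_gridIncr hF hq (j + 1)).symm
    _ = ∑ k ∈ Finset.range (j + 1), gridIncr F q k * (Ioi (q (k + 1))).indicator 1 t := by
        refine Finset.sum_congr rfl fun k hk => ?_
        have hkt : t ∈ Ioi (q (k + 1)) :=
          (hq (Nat.succ_le_succ (Nat.lt_succ_iff.1 (Finset.mem_range.1 hk)))).trans_lt hj
        rw [indicator_of_mem hkt, Pi.one_apply, mul_one]
    _ ≤ stepApprox F q t := ENNReal.sum_le_tsum _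

def grid (s : ℝ) (m k : ℕ) : ℝ := s + k / (m + 1)

lemma grid_strictMono (s : ℝ) (m : ℕ) : StrictMono (grid s m) := fun i j hij => by
  unfold grid
  gcongr

lemma grid_zero (s : ℝ) (m : ℕ) : grid s m 0 = s := by simp [grid]

lemma eventually_exists_grid_mem {s t t' : ℝ} (hst : s < t) (ht't : t' < t) :
    ∀ᶠ m in atTop, ∃ j, t' ≤ grid s m j ∧ grid s m (j + 1) < t := by
  set a := max t' s
  have hat : a < t := max_lt ht't hst
  obtain ⟨N, hN⟩ := exists_nat_gt (2 / (t - a))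
  refine eventually_atTop.2 ⟨N, fun m hm => ⟨⌈(a - s) * (m + 1)⌉₊, ?_, ?_⟩⟩
  all_goals have hm1 : (0 : ℝ) < m + 1 := by positivity
  · have hceil := Nat.le_ceil ((a - s) * (m + 1))
    have : a - s ≤ ⌈(a - s) * (m + 1)⌉₊ / (m + 1) := (le_div_iff₀ hm1).2 hceil
    unfold grid
    linarith [le_max_left t' s]
  · have hceil := Nat.ceil_lt_add_one (mul_nonneg (sub_nonneg.2 (le_max_right t' s)) hm1.le)
    have hmN : 2 < (t - a) * (m + 1) := by
      have : (N : ℝ) ≤ m := by exact_mod_cast hm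
      rw [div_lt_iff₀ (sub_pos.2 hat)] at hN
      nlinarith
    have : ((⌈(a - s) * (m + 1)⌉₊ + 1 : ℕ) : ℝ) / (m + 1) < t - s := by
      rw [div_lt_iff₀ hm1]
      push_cast
      nlinarith
    unfold grid
    linarith

lemma le_liminf_stepApprox (hF : Monotone F) {s t : ℝ} (hst : s < t)
    (hcont : ContinuousAt F t) :
    F t ≤ liminf (fun m => stepApprox F (grid s m) t) atTop := by
  have hlow : ∀ t' < t, F t' ≤ liminf (fun m => stepApprox F (grid s m) t) atTop :=
    fun t' ht't => le_liminf_of_le (by isBoundedDefault) <|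
      (eventually_exists_grid_mem hst ht't).mono fun m ⟨_, hj, hj1⟩ =>
        (hF hj).trans (le_stepApprox hF (grid_strictMono s m).monotone hj1)
  exact le_of_tendsto (hcont.tendsto.mono_left nhdsWithin_le_nhds)
    (eventually_nhdsWithin_of_forall (s := Iio t) hlow)

/-- Fatou's lemma, at the continuity points of `F`, which are almost all points. -/
lemma setLIntegral_le_iSup_stepApprox (hF : Monotone F) {w : ℝ → ℝ≥0∞} (hw : Measurable w)
    {s : ℝ} (hw_top : ∀ t, s < t → w t ≠ ⊤) :
    ∫⁻ t in Ioi s, w t * F t ≤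
      ⨆ m : ℕ, ∫⁻ t in Ioi s, w t * stepApprox F (grid s m) t := by
  have hae : ∀ᵐ t ∂volume.restrict (Ioi s),
      w t * F t ≤ liminf (fun m => w t * stepApprox F (grid s m) t) atTop := by
    filter_upwards [ae_restrict_mem measurableSet_Ioi,
      ae_restrict_of_ae (hF.countable_not_continuousAt.ae_notMem volume)] with t hst hcont
    rw [ENNReal.liminf_const_mul_of_ne_top (hw_top t hst)]
    exact mul_le_mul_right (le_liminf_stepApprox hF hst (not_not.1 hcont)) _
  calc ∫⁻ t in Ioi s, w t * F t
      ≤ ∫⁻ t in Ioi s, liminf (fun m => w t * stepApprox F (grid s m) t) atTop :=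
        lintegral_mono_ae hae
    _ ≤ liminf (fun m => ∫⁻ t in Ioi s, w t * stepApprox F (grid s m) t) atTop :=
        lintegral_liminf_le fun _ => hw.mul measurable_stepApprox
    _ ≤ limsup (fun m => ∫⁻ t in Ioi s, w t * stepApprox F (grid s m) t) atTop :=
        liminf_le_limsup
    _ ≤ ⨆ m : ℕ, ∫⁻ t in Ioi s, w t * stepApprox F (grid s m) t := limsup_le_iSup

end Grid

section Forward

variable {E : Type*} [NormedAddCommGroup E] [NormedSpace ℝ E] [Nontrivial E] [MeasurableSpace E]
  [OpensMeasurableSpace E] [ProperSpace E] (μ : Measure E) [μ.IsOpenPosMeasure]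
  [IsFiniteMeasureOnCompacts μ] {β : ℝ} {u : ℝ → ℝ}

lemma mul_lintegral_stepApprox_le_of_tail_le (hβ : 0 < β) {C : ℝ≥0∞}
    (hineq : ∀ g : E → ℝ≥0∞, Measurable g →
      (⨆ (r : ℝ) (_ : 0 < r), ENNReal.ofReal (u r) * tailIntegral μ β g r) ≤
        C * weightedSup β u (ballIntegral μ g))
    {s : ℝ} (hs : 0 < s) (m : ℕ) :
    ENNReal.ofReal (u s) * (ENNReal.ofReal β * ∫⁻ t in Ioi s,
      ENNReal.ofReal t ^ (-β - 1) * stepApprox (fun t => (A9 β u t)⁻¹) (grid s m) t) ≤ C := by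
  set F : ℝ → ℝ≥0∞ := fun t => (A9 β u t)⁻¹
  have hF : Monotone F := fun _ _ hab => ENNReal.inv_le_inv.2 (A9_antitone hab)
  have hq := grid_strictMono s m
  set g := layeredDensity μ (grid s m) (gridIncr F (grid s m))
  have hRHS : weightedSup β u (ballIntegral μ g) ≤ 1 := weightedSup_le_one fun t =>
    (ballIntegral_layeredDensity_le μ _ _ t).trans
      (tsum_gridIncr_mul_indicator_le hF hq.monotone t)
  have htail := tsum_le_tailIntegral_layeredDensity μ hβ.le hq
    ((grid_zero s m).trans_ge hs.le) (gridIncr F (grid s m))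
  rw [grid_zero] at htail
  calc ENNReal.ofReal (u s) * (ENNReal.ofReal β *
        ∫⁻ t in Ioi s, ENNReal.ofReal t ^ (-β - 1) * stepApprox F (grid s m) t)
      = ENNReal.ofReal (u s) *
          ∑' k, gridIncr F (grid s m) k * ENNReal.ofReal (grid s m (k + 1)) ^ (-β) := by
        rw [ofReal_mul_lintegral_stepApprox hβ hs fun k =>
          (grid_zero s m).symm.trans_le (hq.monotone (Nat.zero_le k))]
    _ ≤ ENNReal.ofReal (u s) * tailIntegral μ β g s := mul_le_mul_right htail _
    _ ≤ ⨆ (r : ℝ) (_ : 0 < r), ENNReal.ofReal (u r) * tailIntegral μ β g r :=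
        le_iSup₂_of_le (f := fun r _ => ENNReal.ofReal (u r) * tailIntegral μ β g r) s hs
          le_rfl
    _ ≤ C * weightedSup β u (ballIntegral μ g) := hineq g (measurable_layeredDensity μ _ _)
    _ ≤ C := by simpa using mul_le_mul_right hRHS C

lemma mul_dualIntegral_le_of_tail_le (hβ : 0 < β) {C : ℝ≥0∞}
    (hineq : ∀ g : E → ℝ≥0∞, Measurable g →
      (⨆ (r : ℝ) (_ : 0 < r), ENNReal.ofReal (u r) * tailIntegral μ β g r) ≤
        C * weightedSup β u (ballIntegral μ g))
    {s : ℝ} (hs : 0 < s) :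
    ENNReal.ofReal β * (ENNReal.ofReal (u s) * dualIntegral β u s) ≤ C := by
  have hF : Monotone fun t => (A9 β u t)⁻¹ := fun _ _ hab =>
    ENNReal.inv_le_inv.2 (A9_antitone hab)
  have hw_top : ∀ t, s < t → ENNReal.ofReal t ^ (-β - 1) ≠ ⊤ := fun t hst =>
    ENNReal.rpow_ne_top_of_ne_zero (ofReal_pos.2 (hs.trans hst)).ne' ofReal_ne_top
  calc ENNReal.ofReal β * (ENNReal.ofReal (u s) * dualIntegral β u s)
      = ENNReal.ofReal (u s) * (ENNReal.ofReal β *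
          ∫⁻ t in Ioi s, ENNReal.ofReal t ^ (-β - 1) * (A9 β u t)⁻¹) := by
        rw [dualIntegral]; ring
    _ ≤ ENNReal.ofReal (u s) * (ENNReal.ofReal β * ⨆ m : ℕ, ∫⁻ t in Ioi s,
          ENNReal.ofReal t ^ (-β - 1) * stepApprox (fun t => (A9 β u t)⁻¹) (grid s m) t) := by
        gcongr
        exact setLIntegral_le_iSup_stepApprox hF (ENNReal.measurable_ofReal.pow_const _) hw_top
    _ ≤ C := by
        rw [ENNReal.mul_iSup, ENNReal.mul_iSup]
        exact iSup_le (mul_lintegral_stepApprox_le_of_tail_le μ hβ hineq hs)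

lemma dualSup_ne_top_of_tail_le (hβ : 0 < β) {C : ℝ≥0∞} (hC : C ≠ ⊤)
    (hineq : ∀ g : E → ℝ≥0∞, Measurable g →
      (⨆ (r : ℝ) (_ : 0 < r), ENNReal.ofReal (u r) * tailIntegral μ β g r) ≤
        C * weightedSup β u (ballIntegral μ g)) :
    dualSup β u ≠ ⊤ :=
  dualSup_ne_top_of_forall_le hβ hC fun _ hs =>
    mul_dualIntegral_le_of_tail_le μ hβ hineq hs

end Forward

theorem stmt9_general (n : ℕ) (hn : 1 ≤ n) (β : ℝ) (hβ : 0 < β) (u : ℝ → ℝ)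
    (hup : ∀ t ∈ Ioi (0 : ℝ), 0 < u t) :
    (∃ C : ℝ≥0∞, C ≠ ⊤ ∧ ∀ g : Rn n → ℝ≥0∞, Measurable g →
        (⨆ (r : ℝ) (_ : 0 < r),
            ENNReal.ofReal (u r) *
              ∫⁻ y in (ball (0 : Rn n) r)ᶜ, ENNReal.ofReal ‖y‖ ^ (-β) * g y) ≤
          C * ⨆ (r : ℝ) (_ : 0 < r),
            ENNReal.ofReal (u r) *
              ⨆ (t : ℝ) (_ : r < t),
                ENNReal.ofReal t ^ (-β) * ∫⁻ y in ball (0 : Rn n) t, g y) ↔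
      (⨆ (r : ℝ) (_ : 0 < r),
        ENNReal.ofReal r ^ β * A9 β u r *
          ∫⁻ t in Ioi r, ENNReal.ofReal t ^ (-β - 1) * (A9 β u t)⁻¹) ≠ ⊤ := by
  have : Nonempty (Fin n) := ⟨⟨0, hn⟩⟩
  exact ⟨fun ⟨C, hC, hineq⟩ => dualSup_ne_top_of_tail_le volume hβ hC hineq,
    fun hD => exists_tail_le_of_dualSup_ne_top volume hβ hup hD⟩

/-- Corollary 5.2: the inequality
`sup_{r>0} u(r) ∫_{ℝⁿ∖B(0,r)} |y|^{-β} g(y) dy ≤ C sup_{r>0} u(r) sup_{t>r} t^{-β} ∫_{B(0,t)} g`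
holds for all nonnegative measurable `g` iff
`sup_{r>0} r^β A(r) ∫_r^∞ t^{-β-1} A(t)⁻¹ dt < ∞`. -/
theorem stmt9 (n : ℕ) (hn : 1 ≤ n) (β : ℝ) (hβ : 0 < β) (u : ℝ → ℝ)
    (huc : ContinuousOn u (Ioi 0)) (hup : ∀ t ∈ Ioi (0 : ℝ), 0 < u t) :
    (∃ C : ℝ≥0∞, C ≠ ⊤ ∧ ∀ g : Rn n → ℝ≥0∞, Measurable g →
        (⨆ (r : ℝ) (_ : 0 < r),
            ENNReal.ofReal (u r) *
              ∫⁻ y in (ball (0 : Rn n) r)ᶜ, ENNReal.ofReal ‖y‖ ^ (-β) * g y) ≤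
          C * ⨆ (r : ℝ) (_ : 0 < r),
            ENNReal.ofReal (u r) *
              ⨆ (t : ℝ) (_ : r < t),
                ENNReal.ofReal t ^ (-β) * ∫⁻ y in ball (0 : Rn n) t, g y) ↔
      (⨆ (r : ℝ) (_ : 0 < r),
        ENNReal.ofReal r ^ β * A9 β u r *
          ∫⁻ t in Ioi r, ENNReal.ofReal t ^ (-β - 1) * (A9 β u t)⁻¹) ≠ ⊤ :=
  stmt9_general n hn β hβ u hup
end
end
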